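/- arXiv:1906.09464 — 4 statements merged into one kernel-verified Lean document; each statement's English description precedes it below -/
import Mathlib

section
/- For every finite signed measure η on X with ∫ V d|η| < ∞ and η(X) = 0, every n ≥ 1, and all θ, θ' ∈ Θ, one has σ_β(P_θ^n η, P_{θ'}^n η) ≤ L_P |θ − θ'| · n · α^{n−1} · ∫ (1 + βV) d|η|. -/
open MeasureTheory ProbabilityTheory ENNReal

noncomputable section

namespace PoissonPaper

variable {X : Type*} [MeasurableSpace X]

/-- The weighted sup-norm `‖φ‖_β = sup_x |φ(x)| / (1 + β V(x))`, valued in `ℝ≥0∞`. -/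
def wnorm (β : ℝ) (V : X → ℝ) (φ : X → ℝ) : ℝ≥0∞ :=
  ⨆ x, ENNReal.ofReal (|φ x| / (1 + β * V x))

open Classical in
/-- The metric `d_β(x,y) = 2 + βV(x) + βV(y)` for `x ≠ y`, `0` on the diagonal. -/
def dBeta (β : ℝ) (V : X → ℝ) (x y : X) : ℝ :=
  if x = y then 0 else 2 + β * V x + β * V y

/-- The oscillation seminorm `|||φ|||_β = sup_{x ≠ y} |φ(x) - φ(y)| / d_β(x,y)`,
valued in `ℝ≥0∞`.  (For `x = y` the quotient is `0/0 = 0`, so the diagonal does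
not contribute.) -/
def osc (β : ℝ) (V : X → ℝ) (φ : X → ℝ) : ℝ≥0∞ :=
  ⨆ x, ⨆ y, ENNReal.ofReal (|φ x - φ y| / dBeta β V x y)

/-- Action of a kernel on functions: `(P*φ)(x) = ∫ φ(y) P(x,dy)`. -/
def act (P : Kernel X X) (φ : X → ℝ) : X → ℝ := fun x => ∫ y, φ y ∂(P x)

/-- Drift inequality `(P*V)(x) ≤ γ V(x) + K`, with the integral taken in the
lower-integral sense (recall `V ≥ 0`). -/
def Drift (P : Kernel X X) (V : X → ℝ) (γ K : ℝ) : Prop :=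
  ∀ x, ∫⁻ y, ENNReal.ofReal (V y) ∂(P x) ≤ ENNReal.ofReal (γ * V x + K)

instance bindIsFinite (μ : Measure X) [IsFiniteMeasure μ] (P : Kernel X X) [IsMarkovKernel P] :
    IsFiniteMeasure (μ.bind P) := by
  constructor
  rw [Measure.bind_apply MeasurableSet.univ (Kernel.measurable P).aemeasurable]
  calc ∫⁻ x, (P x) Set.univ ∂μ = ∫⁻ _, 1 ∂μ := by simp
    _ = μ Set.univ := by simp
    _ < ⊤ := measure_lt_top μ _

/-- The total variation measure `|μ₁ - μ₂|` of the difference of two finite measures. -/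
def tv (μ₁ μ₂ : Measure X) [IsFiniteMeasure μ₁] [IsFiniteMeasure μ₂] : Measure X :=
  (μ₁.toSignedMeasure - μ₂.toSignedMeasure).totalVariation

/-- `σ_β(μ₁, μ₂) = ∫ (1 + βV) d|μ₁ - μ₂|`. -/
def sigmaB (β : ℝ) (V : X → ℝ) (μ₁ μ₂ : Measure X) [IsFiniteMeasure μ₁] [IsFiniteMeasure μ₂] :
    ℝ :=
  ∫ x, (1 + β * V x) ∂(tv μ₁ μ₂)

/-- `σ_β(η) = ∫ (1 + βV) d|η|` for a finite signed measure `η`. -/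
def sigmaS (β : ℝ) (V : X → ℝ) (η : SignedMeasure X) : ℝ :=
  ∫ x, (1 + β * V x) ∂(η.totalVariation)

/-- `n`-fold iterate (power) of a kernel. -/
def kpow (P : Kernel X X) : ℕ → Kernel X X
  | 0 => Kernel.id
  | n + 1 => P ∘ₖ kpow P n

instance kpowIsMarkov (P : Kernel X X) [IsMarkovKernel P] : ∀ n, IsMarkovKernel (kpow P n)
  | 0 => by rw [kpow]; infer_instance
  | n + 1 => by have := kpowIsMarkov P n; rw [kpow]; infer_instance

/-- Action of a (Markov) kernel on finite signed measures, via the Jordan decomposition. -/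
def sbind (P : Kernel X X) [IsMarkovKernel P] (η : SignedMeasure X) : SignedMeasure X :=
  (η.toJordanDecomposition.posPart.bind P).toSignedMeasure -
    (η.toJordanDecomposition.negPart.bind P).toSignedMeasure


/-!
Write `ξₙ = P_θⁿ η - P_θ'ⁿ η`. Then `ξₙ₊₁ = (P_θ - P_θ')(P_θⁿ η) + P_θ' ξₙ`, and both `P_θⁿ η` and
`ξₙ` have mass zero. The kernel Lipschitz condition, integrated against the Jordan parts of a
signed measure `ζ`, gives `σ_β((P_θ - P_θ')ζ) ≤ L_P |θ - θ'| σ_β(ζ)`; the contraction, assumed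
only for probability measures, extends by homogeneity to pairs of finite measures of equal mass,
hence to signed measures of mass zero. So `σ_β(P_θⁿ η) ≤ αⁿ σ_β(η)` and
`σ_β(ξₙ₊₁) ≤ L_P |θ - θ'| αⁿ σ_β(η) + α σ_β(ξₙ)`, which by induction gives
`σ_β(ξₙ) ≤ n L_P |θ - θ'| αⁿ⁻¹ σ_β(η)`.

All estimates are made for the `ℝ≥0∞`-valued weighted mass `∫⁻ (1 + βV)`; the drift condition
keeps the masses finite, which is what lets the real-valued hypotheses be transported there.
-/

open scoped NNReal

section TotalVariation

theorem _root_.MeasureTheory.SignedMeasure.totalVariation_add_le (η ζ : SignedMeasure X) :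
    (η + ζ).totalVariation ≤ η.totalVariation + ζ.totalVariation := by
  simpa only [SignedMeasure.totalVariation_eq_variation] using VectorMeasure.variation_add_le

theorem _root_.MeasureTheory.SignedMeasure.totalVariation_sub_le (η ζ : SignedMeasure X) :
    (η - ζ).totalVariation ≤ η.totalVariation + ζ.totalVariation := by
  simpa only [SignedMeasure.totalVariation_eq_variation] using VectorMeasure.variation_sub_le

theorem _root_.MeasureTheory.Measure.totalVariation_toSignedMeasure (μ : Measure X)
    [IsFiniteMeasure μ] : μ.toSignedMeasure.totalVariation = μ := by
  rw [SignedMeasure.totalVariation_eq_variation, Measure.variation_toSignedMeasure]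

theorem tv_le_add (μ ν : Measure X) [IsFiniteMeasure μ] [IsFiniteMeasure ν] : tv μ ν ≤ μ + ν := by
  rw [tv]
  simpa only [Measure.totalVariation_toSignedMeasure] using
    SignedMeasure.totalVariation_sub_le μ.toSignedMeasure ν.toSignedMeasure

theorem tv_smul (r : ℝ≥0) (μ ν : Measure X) [IsFiniteMeasure μ] [IsFiniteMeasure ν] :
    tv (r • μ) (r • ν) = r • tv μ ν := by
  have h : (r • μ).toSignedMeasure - (r • ν).toSignedMeasure =
      (r : ℝ) • (μ.toSignedMeasure - ν.toSignedMeasure) := by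
    rw [Measure.toSignedMeasure_smul, Measure.toSignedMeasure_smul, smul_sub]
    rfl
  rw [tv, tv, h, SignedMeasure.totalVariation_eq_variation,
    SignedMeasure.totalVariation_eq_variation, VectorMeasure.variation_smul, NNReal.nnnorm_eq]

theorem _root_.MeasureTheory.SignedMeasure.exists_totalVariation_apply_eq (s : SignedMeasure X) :
    ∃ i, MeasurableSet i ∧ ∀ A, MeasurableSet A →
      s.totalVariation A = ‖s (A ∩ i)‖ₑ + ‖s (A \ i)‖ₑ := by
  obtain ⟨i, hi, hpos, hneg, hposPart, hnegPart⟩ := s.toJordanDecomposition_spec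
  refine ⟨i, hi, fun A hA => ?_⟩
  have h₁ : 0 ≤ s (i ∩ A) :=
    s.nonneg_of_zero_le_restrict (s.zero_le_restrict_subset hi Set.inter_subset_left hpos)
  have h₂ : s (iᶜ ∩ A) ≤ 0 :=
    s.nonpos_of_restrict_le_zero (s.restrict_le_zero_subset hi.compl Set.inter_subset_left hneg)
  rw [SignedMeasure.totalVariation, Measure.add_apply, hposPart, hnegPart,
    SignedMeasure.toMeasureOfZeroLE_apply _ hpos hi hA,
    SignedMeasure.toMeasureOfLEZero_apply _ hneg hi.compl hA, Set.inter_comm A i,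
    Set.sdiff_eq_compl_inter, Real.enorm_of_nonneg h₁, ← enorm_neg (s (iᶜ ∩ A)),
    Real.enorm_of_nonneg (neg_nonneg.2 h₂), ENNReal.ofReal_eq_coe_nnreal,
    ENNReal.ofReal_eq_coe_nnreal]

end TotalVariation

section WeightedMass

variable {β : ℝ} {V : X → ℝ}

def weightedMass (β : ℝ) (V : X → ℝ) (μ : Measure X) : ℝ≥0∞ :=
  ∫⁻ x, ENNReal.ofReal (1 + β * V x) ∂μ

theorem ofReal_one_add_mul {b v : ℝ} (hb : 0 ≤ b) (hv : 0 ≤ v) :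
    ENNReal.ofReal (1 + b * v) = 1 + ENNReal.ofReal b * ENNReal.ofReal v := by
  rw [ENNReal.ofReal_add zero_le_one (mul_nonneg hb hv), ENNReal.ofReal_one, ENNReal.ofReal_mul hb]

theorem weightedMass_eq (hV : Measurable V) (hV0 : ∀ x, 0 ≤ V x) (hβ : 0 ≤ β) (μ : Measure X) :
    weightedMass β V μ = μ Set.univ + ENNReal.ofReal β * ∫⁻ x, ENNReal.ofReal (V x) ∂μ := by
  simp_rw [weightedMass, ofReal_one_add_mul hβ (hV0 _)]
  rw [lintegral_add_left measurable_const, lintegral_const_mul _ hV.ennreal_ofReal,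
    lintegral_one]

theorem weightedMass_add (μ ν : Measure X) :
    weightedMass β V (μ + ν) = weightedMass β V μ + weightedMass β V ν :=
  lintegral_add_measure _ μ ν

theorem weightedMass_mono {μ ν : Measure X} (h : μ ≤ ν) :
    weightedMass β V μ ≤ weightedMass β V ν :=
  lintegral_mono' h le_rfl

theorem weightedMass_smul (r : ℝ≥0) (μ : Measure X) :
    weightedMass β V (r • μ) = r * weightedMass β V μ := by
  rw [weightedMass, ← Measure.coe_nnreal_smul, lintegral_smul_measure, smul_eq_mul, weightedMass]

theorem weightedMass_ne_top_iff_integrable (hV : Measurable V) (hV0 : ∀ x, 0 ≤ V x) (hβ : 0 < β)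
    (μ : Measure X) [IsFiniteMeasure μ] : weightedMass β V μ ≠ ∞ ↔ Integrable V μ := by
  rw [weightedMass_eq hV hV0 hβ.le, ← lintegral_ofReal_ne_top_iff_integrable
    hV.aestronglyMeasurable (Filter.Eventually.of_forall hV0)]
  simp [ENNReal.mul_eq_top, hβ, measure_ne_top]

theorem toReal_weightedMass (hV : Measurable V) (hV0 : ∀ x, 0 ≤ V x) (hβ : 0 ≤ β)
    (μ : Measure X) : (weightedMass β V μ).toReal = ∫ x, (1 + β * V x) ∂μ := by
  rw [integral_eq_lintegral_of_nonneg_ae (f := fun x => 1 + β * V x)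
    (Filter.Eventually.of_forall fun x => add_nonneg zero_le_one (mul_nonneg hβ (hV0 x)))
    (by fun_prop), weightedMass]

end WeightedMass

section Drift

variable {β γ K : ℝ} {V : X → ℝ} {P : Kernel X X}

theorem weightedMass_bind (hV : Measurable V) (μ : Measure X) :
    weightedMass β V (μ.bind P) = ∫⁻ x, weightedMass β V (P x) ∂μ :=
  Measure.lintegral_bind P.measurable.aemeasurable (by fun_prop)

theorem weightedMass_apply_le_of_drift [IsMarkovKernel P] (hV : Measurable V)
    (hV0 : ∀ x, 0 ≤ V x) (hβ : 0 ≤ β) (hγ : γ ≤ 1) (hP : Drift P V γ K) (x : X) :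
    weightedMass β V (P x) ≤
      (1 + ENNReal.ofReal β * ENNReal.ofReal K) * ENNReal.ofReal (1 + β * V x) := by
  have hPV : ∫⁻ y, ENNReal.ofReal (V y) ∂(P x) ≤ ENNReal.ofReal (V x) + ENNReal.ofReal K :=
    (hP x).trans <| (ENNReal.ofReal_le_ofReal (by nlinarith [hV0 x])).trans ENNReal.ofReal_add_le
  rw [weightedMass_eq hV hV0 hβ, measure_univ, ofReal_one_add_mul hβ (hV0 x)]
  set b := ENNReal.ofReal β
  calc 1 + b * ∫⁻ y, ENNReal.ofReal (V y) ∂(P x)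
      ≤ 1 + b * (ENNReal.ofReal (V x) + ENNReal.ofReal K) := by gcongr
    _ = (1 + b * ENNReal.ofReal K) + b * ENNReal.ofReal (V x) := by ring
    _ ≤ (1 + b * ENNReal.ofReal K) + (1 + b * ENNReal.ofReal K) * (b * ENNReal.ofReal (V x)) :=
        add_le_add_right (le_mul_of_one_le_left' le_self_add) _
    _ = _ := by ring

theorem weightedMass_bind_le_of_drift [IsMarkovKernel P] (hV : Measurable V)
    (hV0 : ∀ x, 0 ≤ V x) (hβ : 0 ≤ β) (hγ : γ ≤ 1) (hP : Drift P V γ K) (μ : Measure X) :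
    weightedMass β V (μ.bind P) ≤
      (1 + ENNReal.ofReal β * ENNReal.ofReal K) * weightedMass β V μ := by
  rw [weightedMass_bind hV, weightedMass, ← lintegral_const_mul _ (by fun_prop)]
  exact lintegral_mono (weightedMass_apply_le_of_drift hV hV0 hβ hγ hP)

end Drift

section KernelDifference

variable {β : ℝ} {V : X → ℝ} {P Q : Kernel X X} [IsMarkovKernel P] [IsMarkovKernel Q]

/- `m` need not be measurable in `y` (think `y ↦ tv (P y) (Q y)`), so `∫⁻ y` is a lower integral
and the bound has to be built up from sets, without Fubini. -/
theorem lintegral_le_lintegral_lintegral_of_apply_le {Y : Type*} [MeasurableSpace Y] {ρ : Measure X}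
    {ν : Measure Y} {m : Y → Measure X} (h : ∀ A, MeasurableSet A → ρ A ≤ ∫⁻ y, m y A ∂ν)
    {f : X → ℝ≥0∞} (hf : Measurable f) :
    ∫⁻ x, f x ∂ρ ≤ ∫⁻ y, ∫⁻ x, f x ∂(m y) ∂ν := by
  refine Measurable.ennreal_induction (fun c A hA => ?_) (fun f g _ hf _ ihf ihg => ?_)
    (fun f hf hmono ih => ?_) hf
  · simp only [lintegral_indicator_const hA]
    calc c * ρ A ≤ c * ∫⁻ y, m y A ∂ν := by gcongr; exact h A hA
      _ ≤ ∫⁻ y, c * m y A ∂ν := lintegral_const_mul_le _ _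
  · simp only [Pi.add_apply, lintegral_add_left hf]
    exact (add_le_add ihf ihg).trans (le_lintegral_add _ _)
  · rw [lintegral_iSup hf hmono]
    exact iSup_le fun n => (ih n).trans <|
      lintegral_mono fun y => lintegral_mono fun x => le_iSup (fun n => f n x) n

theorem measureReal_bind_apply (ν : Measure X) {B : Set X} (hB : MeasurableSet B) :
    (ν.bind P).real B = ∫ x, (P x).real B ∂ν := by
  rw [measureReal_def, Measure.bind_apply hB P.measurable.aemeasurable]
  exact (integral_toReal (P.measurable_coe hB).aemeasurable
    (ae_of_all _ fun x => measure_lt_top _ _)).symm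

theorem toSignedMeasure_bind_sub_apply (ν : Measure X) [IsFiniteMeasure ν] {B : Set X}
    (hB : MeasurableSet B) :
    ((ν.bind P).toSignedMeasure - (ν.bind Q).toSignedMeasure) B =
      ∫ x, ((P x).toSignedMeasure - (Q x).toSignedMeasure) B ∂ν := by
  have hint (R : Kernel X X) [IsMarkovKernel R] : Integrable (fun x => (R x).real B) ν :=
    .of_bound (R.measurable_coe hB).ennreal_toReal.aestronglyMeasurable 1
      (ae_of_all _ fun x => by
        rw [Real.norm_of_nonneg measureReal_nonneg]
        exact measureReal_le_one)
  simp_rw [Measure.toSignedMeasure_sub_apply hB, measureReal_bind_apply ν hB]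
  exact (integral_sub (hint P) (hint Q)).symm

theorem tv_bind_apply_le (ν : Measure X) [IsFiniteMeasure ν] {A : Set X} (hA : MeasurableSet A) :
    tv (ν.bind P) (ν.bind Q) A ≤ ∫⁻ x, tv (P x) (Q x) A ∂ν := by
  have hset : ∀ B, MeasurableSet B →
      ‖((ν.bind P).toSignedMeasure - (ν.bind Q).toSignedMeasure) B‖ₑ ≤
        ∫⁻ x, tv (P x) (Q x) B ∂ν := fun B hB => by
    rw [toSignedMeasure_bind_sub_apply ν hB]
    exact (enorm_integral_le_lintegral_enorm _).trans
      (lintegral_mono fun x => SignedMeasure.enorm_le_totalVariation _ _)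
  obtain ⟨i, hi, htv⟩ := SignedMeasure.exists_totalVariation_apply_eq
    ((ν.bind P).toSignedMeasure - (ν.bind Q).toSignedMeasure)
  rw [tv, htv A hA]
  calc _ ≤ (∫⁻ x, tv (P x) (Q x) (A ∩ i) ∂ν) + ∫⁻ x, tv (P x) (Q x) (A \ i) ∂ν :=
        add_le_add (hset _ (hA.inter hi)) (hset _ (hA.diff hi))
    _ ≤ ∫⁻ x, tv (P x) (Q x) (A ∩ i) + tv (P x) (Q x) (A \ i) ∂ν := le_lintegral_add _ _
    _ = ∫⁻ x, tv (P x) (Q x) A ∂ν := by simp_rw [measure_inter_add_sdiff A hi]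

theorem weightedMass_tv_bind_le (hV : Measurable V) (ν : Measure X) [IsFiniteMeasure ν] :
    weightedMass β V (tv (ν.bind P) (ν.bind Q)) ≤
      ∫⁻ x, weightedMass β V (tv (P x) (Q x)) ∂ν :=
  lintegral_le_lintegral_lintegral_of_apply_le (fun _ hA => tv_bind_apply_le ν hA) (by fun_prop)

end KernelDifference

section SignedBind

variable {P : Kernel X X} [IsMarkovKernel P]

theorem toSignedMeasure_posPart_sub_negPart (η : SignedMeasure X) :
    η.toJordanDecomposition.posPart.toSignedMeasure -
      η.toJordanDecomposition.negPart.toSignedMeasure = η :=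
  η.toSignedMeasure_toJordanDecomposition

theorem toSignedMeasure_sub_eq_sub_iff {a b c d : Measure X} [IsFiniteMeasure a]
    [IsFiniteMeasure b] [IsFiniteMeasure c] [IsFiniteMeasure d] :
    a.toSignedMeasure - b.toSignedMeasure = c.toSignedMeasure - d.toSignedMeasure ↔
      a + d = c + b := by
  rw [sub_eq_sub_iff_add_eq_add, ← Measure.toSignedMeasure_add, ← Measure.toSignedMeasure_add,
    Measure.toSignedMeasure_eq_toSignedMeasure_iff]

theorem sbind_toSignedMeasure_sub (p q : Measure X) [IsFiniteMeasure p] [IsFiniteMeasure q] :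
    sbind P (p.toSignedMeasure - q.toSignedMeasure) =
      (p.bind P).toSignedMeasure - (q.bind P).toSignedMeasure := by
  have hj := toSignedMeasure_posPart_sub_negPart (p.toSignedMeasure - q.toSignedMeasure)
  rw [toSignedMeasure_sub_eq_sub_iff] at hj
  rw [sbind, toSignedMeasure_sub_eq_sub_iff, ← Measure.comp_add, ← Measure.comp_add, hj]

theorem sbind_sub (η ζ : SignedMeasure X) : sbind P (η - ζ) = sbind P η - sbind P ζ := by
  set ηj := η.toJordanDecomposition
  set ζj := ζ.toJordanDecomposition
  have h : η - ζ = (ηj.posPart + ζj.negPart).toSignedMeasure -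
      (ηj.negPart + ζj.posPart).toSignedMeasure := by
    rw [Measure.toSignedMeasure_add, Measure.toSignedMeasure_add]
    conv_lhs =>
      rw [← toSignedMeasure_posPart_sub_negPart η, ← toSignedMeasure_posPart_sub_negPart ζ]
    abel
  rw [h, sbind_toSignedMeasure_sub]
  simp only [Measure.comp_add, Measure.toSignedMeasure_add, sbind]
  abel

theorem sbind_apply_univ (η : SignedMeasure X) : sbind P η Set.univ = η Set.univ := by
  conv_rhs => rw [← toSignedMeasure_posPart_sub_negPart η]
  rw [sbind, Measure.toSignedMeasure_sub_apply MeasurableSet.univ,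
    Measure.toSignedMeasure_sub_apply MeasurableSet.univ, measureReal_def, measureReal_def,
    Measure.comp_apply_univ, Measure.comp_apply_univ]
  rfl

theorem sbind_kpow_zero (η : SignedMeasure X) : sbind (kpow P 0) η = η := by
  simp only [sbind, kpow, Measure.id_comp, toSignedMeasure_posPart_sub_negPart]

theorem sbind_kpow_succ (n : ℕ) (η : SignedMeasure X) :
    sbind (kpow P (n + 1)) η = sbind P (sbind (kpow P n) η) := by
  rw [sbind.eq_1 (kpow P n), sbind_toSignedMeasure_sub]
  simp only [Measure.comp_assoc]
  rfl

end SignedBind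

section Estimates

variable {β : ℝ} {V : X → ℝ} {P Q : Kernel X X} [IsMarkovKernel P] [IsMarkovKernel Q]

theorem weightedMass_tv_ne_top {μ ν : Measure X} [IsFiniteMeasure μ] [IsFiniteMeasure ν]
    (hμ : weightedMass β V μ ≠ ∞) (hν : weightedMass β V ν ≠ ∞) :
    weightedMass β V (tv μ ν) ≠ ∞ :=
  ne_top_of_le_ne_top (by rw [weightedMass_add]; exact ENNReal.add_ne_top.2 ⟨hμ, hν⟩)
    (weightedMass_mono (tv_le_add μ ν))

theorem weightedMass_totalVariation_sbind_sub_sbind_le (hV : Measurable V) {c : ℝ≥0∞}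
    (hPQ : ∀ x, weightedMass β V (tv (P x) (Q x)) ≤ c * ENNReal.ofReal (1 + β * V x))
    (η : SignedMeasure X) :
    weightedMass β V (sbind P η - sbind Q η).totalVariation ≤
      c * weightedMass β V η.totalVariation := by
  have hbind (ν : Measure X) [IsFiniteMeasure ν] :
      weightedMass β V (tv (ν.bind P) (ν.bind Q)) ≤ c * weightedMass β V ν := by
    refine (weightedMass_tv_bind_le hV ν).trans ?_
    rw [weightedMass, ← lintegral_const_mul _ (by fun_prop)]
    exact lintegral_mono hPQ
  set ηpos := η.toJordanDecomposition.posPart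
  set ηneg := η.toJordanDecomposition.negPart
  have hsplit : sbind P η - sbind Q η =
      ((ηpos.bind P).toSignedMeasure - (ηpos.bind Q).toSignedMeasure) -
        ((ηneg.bind P).toSignedMeasure - (ηneg.bind Q).toSignedMeasure) := by
    rw [sbind, sbind]
    abel
  calc weightedMass β V (sbind P η - sbind Q η).totalVariation
      ≤ weightedMass β V (tv (ηpos.bind P) (ηpos.bind Q) + tv (ηneg.bind P) (ηneg.bind Q)) := by
        rw [hsplit]
        exact weightedMass_mono (SignedMeasure.totalVariation_sub_le _ _)
    _ ≤ c * weightedMass β V ηpos + c * weightedMass β V ηneg := by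
        rw [weightedMass_add]
        exact add_le_add (hbind ηpos) (hbind ηneg)
    _ = c * weightedMass β V η.totalVariation := by
        rw [← mul_add, ← weightedMass_add]
        rfl

theorem weightedMass_tv_le_of_sigmaB_le {γ K c : ℝ} (hV : Measurable V)
    (hV0 : ∀ x, 0 ≤ V x) (hβ : 0 ≤ β) (hγ : γ ≤ 1) (hP : Drift P V γ K) (hQ : Drift Q V γ K)
    {x : X} (h : sigmaB β V (P x) (Q x) ≤ c * (1 + β * V x)) :
    weightedMass β V (tv (P x) (Q x)) ≤ ENNReal.ofReal c * ENNReal.ofReal (1 + β * V x) := by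
  have hfin : weightedMass β V (tv (P x) (Q x)) ≠ ∞ :=
    weightedMass_tv_ne_top
      (ne_top_of_le_ne_top (by finiteness) (weightedMass_apply_le_of_drift hV hV0 hβ hγ hP x))
      (ne_top_of_le_ne_top (by finiteness) (weightedMass_apply_le_of_drift hV hV0 hβ hγ hQ x))
  rw [← ENNReal.ofReal_toReal hfin, ← ENNReal.ofReal_mul' (by positivity [hV0 x]),
    toReal_weightedMass hV hV0 hβ]
  exact ENNReal.ofReal_le_ofReal h

def IsWeightedContraction (β : ℝ) (V : X → ℝ) (P : Kernel X X) [IsMarkovKernel P] (a : ℝ≥0∞) :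
    Prop :=
  ∀ (μ₁ μ₂ : Measure X) [IsProbabilityMeasure μ₁] [IsProbabilityMeasure μ₂],
    weightedMass β V μ₁ ≠ ∞ → weightedMass β V μ₂ ≠ ∞ →
      weightedMass β V (tv (μ₁.bind P) (μ₂.bind P)) ≤ a * weightedMass β V (tv μ₁ μ₂)

theorem isWeightedContraction_of_sigmaB_le {γ K α : ℝ} (hV : Measurable V) (hV0 : ∀ x, 0 ≤ V x)
    (hβ : 0 < β) (hγ : γ ≤ 1) (hdrift : Drift P V γ K)
    (hsig : ∀ (μ₁ μ₂ : Measure X) [IsProbabilityMeasure μ₁] [IsProbabilityMeasure μ₂],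
      Integrable V μ₁ → Integrable V μ₂ →
      sigmaB β V (μ₁.bind P) (μ₂.bind P) ≤ α * sigmaB β V μ₁ μ₂) :
    IsWeightedContraction β V P (ENNReal.ofReal α) := by
  intro μ₁ μ₂ _ _ h₁ h₂
  have hbind {μ : Measure X} (h : weightedMass β V μ ≠ ∞) : weightedMass β V (μ.bind P) ≠ ∞ :=
    ne_top_of_le_ne_top (by finiteness) (weightedMass_bind_le_of_drift hV hV0 hβ.le hγ hdrift μ)
  rw [← ENNReal.ofReal_toReal (weightedMass_tv_ne_top (hbind h₁) (hbind h₂)),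
    ← ENNReal.ofReal_toReal (weightedMass_tv_ne_top h₁ h₂),
    ← ENNReal.ofReal_mul' ENNReal.toReal_nonneg, toReal_weightedMass hV hV0 hβ.le,
    toReal_weightedMass hV hV0 hβ.le]
  exact ENNReal.ofReal_le_ofReal <| hsig μ₁ μ₂
    ((weightedMass_ne_top_iff_integrable hV hV0 hβ μ₁).1 h₁)
    ((weightedMass_ne_top_iff_integrable hV hV0 hβ μ₂).1 h₂)

theorem exists_eq_smul_isProbabilityMeasure (p : Measure X) [IsFiniteMeasure p]
    (hp : p Set.univ ≠ 0) :
    ∃ μ : Measure X, IsProbabilityMeasure μ ∧ p = (p Set.univ).toNNReal • μ := by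
  have : NeZero p := ⟨fun h => hp (by simp [h])⟩
  refine ⟨(p Set.univ)⁻¹ • p, inferInstance, ?_⟩
  rw [← Measure.coe_nnreal_smul, ENNReal.coe_toNNReal (measure_ne_top _ _), smul_smul,
    ENNReal.mul_inv_cancel hp (measure_ne_top _ _), one_smul]

theorem IsWeightedContraction.weightedMass_tv_bind_le {a : ℝ≥0∞}
    (hP : IsWeightedContraction β V P a) (p q : Measure X) [IsFiniteMeasure p] [IsFiniteMeasure q]
    (hpq : p Set.univ = q Set.univ) (hp : weightedMass β V p ≠ ∞) (hq : weightedMass β V q ≠ ∞) :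
    weightedMass β V (tv (p.bind P) (q.bind P)) ≤ a * weightedMass β V (tv p q) := by
  rcases eq_or_ne (p Set.univ) 0 with h0 | h0
  · obtain rfl := Measure.measure_univ_eq_zero.mp h0
    obtain rfl := Measure.measure_univ_eq_zero.mp (hpq ▸ h0)
    simp [tv, weightedMass, SignedMeasure.totalVariation_zero]
  obtain ⟨μ₁, _, hp₁⟩ := exists_eq_smul_isProbabilityMeasure p h0
  obtain ⟨μ₂, _, hq₂⟩ := exists_eq_smul_isProbabilityMeasure q (hpq ▸ h0)
  have hr : (p Set.univ).toNNReal ≠ 0 := (ENNReal.toNNReal_pos h0 (measure_ne_top _ _)).ne'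
  rw [← hpq] at hq₂
  generalize (p Set.univ).toNNReal = r at hp₁ hq₂ hr
  subst hp₁ hq₂
  rw [weightedMass_smul] at hp hq
  simp only [Measure.bind_smul, tv_smul, weightedMass_smul]
  rw [mul_left_comm]
  gcongr
  refine hP μ₁ μ₂ (fun h => hp ?_) (fun h => hq ?_) <;>
    rw [h, ENNReal.mul_top (ENNReal.coe_ne_zero.2 hr)]

theorem IsWeightedContraction.weightedMass_totalVariation_sbind_le {a : ℝ≥0∞}
    (hP : IsWeightedContraction β V P a) {η : SignedMeasure X} (h0 : η Set.univ = 0)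
    (hη : weightedMass β V η.totalVariation ≠ ∞) :
    weightedMass β V (sbind P η).totalVariation ≤ a * weightedMass β V η.totalVariation := by
  have hmass : η.toJordanDecomposition.posPart Set.univ =
      η.toJordanDecomposition.negPart Set.univ := by
    have h := η.apply_eq_posPart_real_sub_negPart_real MeasurableSet.univ
    rw [h0, eq_comm, sub_eq_zero] at h
    exact (ENNReal.toReal_eq_toReal_iff' (measure_ne_top _ _) (measure_ne_top _ _)).1 h
  rw [SignedMeasure.totalVariation, weightedMass_add, ENNReal.add_ne_top] at hη
  have htv : tv η.toJordanDecomposition.posPart η.toJordanDecomposition.negPart =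
      η.totalVariation := by
    rw [tv, toSignedMeasure_posPart_sub_negPart]
  have h := hP.weightedMass_tv_bind_le _ _ hmass hη.1 hη.2
  rwa [htv] at h

theorem IsWeightedContraction.weightedMass_totalVariation_sbind_kpow_le {a : ℝ≥0∞} (ha : a ≠ ∞)
    (hP : IsWeightedContraction β V P a) {η : SignedMeasure X} (h0 : η Set.univ = 0)
    (hη : weightedMass β V η.totalVariation ≠ ∞) (n : ℕ) :
    weightedMass β V (sbind (kpow P n) η).totalVariation ≤
      a ^ n * weightedMass β V η.totalVariation := by
  induction n with
  | zero => rw [sbind_kpow_zero, pow_zero, one_mul]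
  | succ n ih =>
    rw [sbind_kpow_succ, pow_succ', mul_assoc]
    refine (hP.weightedMass_totalVariation_sbind_le (by rw [sbind_apply_univ, h0])
      (ne_top_of_le_ne_top (ENNReal.mul_ne_top (ENNReal.pow_ne_top ha) hη) ih)).trans ?_
    gcongr

theorem weightedMass_totalVariation_sbind_kpow_sub_le (hV : Measurable V) {a c : ℝ≥0∞}
    (ha : a ≠ ∞) (hP : IsWeightedContraction β V P a) (hQ : IsWeightedContraction β V Q a)
    (hPQ : ∀ x, weightedMass β V (tv (P x) (Q x)) ≤ c * ENNReal.ofReal (1 + β * V x))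
    {η : SignedMeasure X} (h0 : η Set.univ = 0) (hη : weightedMass β V η.totalVariation ≠ ∞)
    (n : ℕ) :
    weightedMass β V (sbind (kpow P n) η - sbind (kpow Q n) η).totalVariation ≤
      n * c * a ^ (n - 1) * weightedMass β V η.totalVariation := by
  induction n with
  | zero => simp [sbind_kpow_zero, weightedMass, SignedMeasure.totalVariation_zero]
  | succ n ih =>
    set A := sbind (kpow P n) η
    set B := sbind (kpow Q n) η
    have hA := hP.weightedMass_totalVariation_sbind_kpow_le ha h0 hη n
    have hB := hQ.weightedMass_totalVariation_sbind_kpow_le ha h0 hη n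
    have hAB : weightedMass β V (A - B).totalVariation ≠ ∞ := by
      refine ne_top_of_le_ne_top ?_ (weightedMass_mono (SignedMeasure.totalVariation_sub_le A B))
      rw [weightedMass_add]
      exact ENNReal.add_ne_top.2 ⟨ne_top_of_le_ne_top (by finiteness) hA,
        ne_top_of_le_ne_top (by finiteness) hB⟩
    have hAB0 : (A - B) Set.univ = 0 := by
      rw [sub_apply, sbind_apply_univ, sbind_apply_univ, sub_self]
    have hsplit : sbind (kpow P (n + 1)) η - sbind (kpow Q (n + 1)) η =
        (sbind P A - sbind Q A) + sbind Q (A - B) := by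
      rw [sbind_kpow_succ, sbind_kpow_succ, sbind_sub]
      abel
    calc weightedMass β V (sbind (kpow P (n + 1)) η - sbind (kpow Q (n + 1)) η).totalVariation
        ≤ weightedMass β V (sbind P A - sbind Q A).totalVariation +
            weightedMass β V (sbind Q (A - B)).totalVariation := by
          rw [hsplit, ← weightedMass_add]
          exact weightedMass_mono (SignedMeasure.totalVariation_add_le _ _)
      _ ≤ c * (a ^ n * weightedMass β V η.totalVariation) +
            a * (n * c * a ^ (n - 1) * weightedMass β V η.totalVariation) := by
          gcongr
          · exact (weightedMass_totalVariation_sbind_sub_sbind_le hV hPQ A).trans (by gcongr)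
          · exact (hQ.weightedMass_totalVariation_sbind_le hAB0 hAB).trans (by gcongr)
      _ = ↑(n + 1) * c * a ^ (n + 1 - 1) * weightedMass β V η.totalVariation := by
          cases n with
          | zero => simp
          | succ m => simp only [Nat.add_sub_cancel]; push_cast; ring

end Estimates

theorem iterated_kernel_lipschitz_zero_mass_general
    {X : Type*} [MeasurableSpace X] {k : ℕ} {Θ : Set (EuclideanSpace ℝ (Fin k))}
    (P : Θ → Kernel X X) [∀ θ, IsMarkovKernel (P θ)]
    (V : X → ℝ) (hVmeas : Measurable V) (hV0 : ∀ x, 0 ≤ V x)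
    (β : ℝ) (hβ : 0 < β)
    (γ K : ℝ) (hγ : γ ∈ Set.Ioo (0:ℝ) 1) (hdrift : ∀ θ, Drift (P θ) V γ K)
    (L_P : ℝ)
    (hlip : ∀ θ θ' : Θ, ∀ x,
      sigmaB β V ((P θ) x) ((P θ') x) ≤ L_P * ‖θ.1 - θ'.1‖ * (1 + β * V x))
    (α : ℝ) (hα : α ∈ Set.Ioo γ 1)
    (hsig : ∀ θ, ∀ (μ₁ μ₂ : Measure X) [IsProbabilityMeasure μ₁] [IsProbabilityMeasure μ₂],
      Integrable V μ₁ → Integrable V μ₂ →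
      sigmaB β V (μ₁.bind (P θ)) (μ₂.bind (P θ)) ≤ α * sigmaB β V μ₁ μ₂) :
    ∀ η : SignedMeasure X, Integrable V η.totalVariation → η Set.univ = 0 →
      ∀ n : ℕ, 1 ≤ n → ∀ θ θ' : Θ,
      sigmaS β V (sbind (kpow (P θ) n) η - sbind (kpow (P θ') n) η) ≤
        L_P * ‖θ.1 - θ'.1‖ * (n : ℝ) * α ^ (n - 1) *
          ∫ x, (1 + β * V x) ∂η.totalVariation := by
  intro η hη hη0 n _ θ θ'
  rcases isEmpty_or_nonempty X with _ | ⟨⟨x₀⟩⟩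
  · rw [sigmaS, integral_of_isEmpty, integral_of_isEmpty, mul_zero]
  have hc : 0 ≤ L_P * ‖θ.1 - θ'.1‖ := nonneg_of_mul_nonneg_left
    ((integral_nonneg fun x => by positivity [hV0 x]).trans (hlip θ θ' x₀)) (by positivity [hV0 x₀])
  have hα0 : 0 ≤ α := hγ.1.le.trans hα.1.le
  have hcontr (θ : Θ) : IsWeightedContraction β V (P θ) (ENNReal.ofReal α) :=
    isWeightedContraction_of_sigmaB_le hVmeas hV0 hβ hγ.2.le (hdrift θ) (hsig θ)
  have hηW := (weightedMass_ne_top_iff_integrable hVmeas hV0 hβ _).2 hη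
  have key := weightedMass_totalVariation_sbind_kpow_sub_le hVmeas ENNReal.ofReal_ne_top
    (hcontr θ) (hcontr θ') (fun x => weightedMass_tv_le_of_sigmaB_le hVmeas hV0 hβ.le
      hγ.2.le (hdrift θ) (hdrift θ') (hlip θ θ' x)) hη0 hηW n
  rw [sigmaS, ← toReal_weightedMass hVmeas hV0 hβ.le, ← toReal_weightedMass hVmeas hV0 hβ.le]
  calc _ ≤ (n * ENNReal.ofReal (L_P * ‖θ.1 - θ'.1‖) * ENNReal.ofReal α ^ (n - 1) *
        weightedMass β V η.totalVariation).toReal := ENNReal.toReal_mono (by finiteness) key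
    _ = _ := by
      simp only [ENNReal.toReal_mul, ENNReal.toReal_pow, ENNReal.toReal_natCast,
        ENNReal.toReal_ofReal hc, ENNReal.toReal_ofReal hα0]
      ring

/-- Improved Lipschitz bound for iterated kernels applied to signed
measures of total mass zero. -/
theorem iterated_kernel_lipschitz_zero_mass
    {X : Type*} [MeasurableSpace X] {k : ℕ} {Θ : Set (EuclideanSpace ℝ (Fin k))}
    (hΘ : Θ.Nonempty) (P : Θ → Kernel X X) [∀ θ, IsMarkovKernel (P θ)]
    (V : X → ℝ) (hVmeas : Measurable V) (hV0 : ∀ x, 0 ≤ V x)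
    (β : ℝ) (hβ : 0 < β)
    (γ K : ℝ) (hγ : γ ∈ Set.Ioo (0:ℝ) 1) (hK : 0 ≤ K) (hdrift : ∀ θ, Drift (P θ) V γ K)
    (L_P : ℝ)
    (hlip : ∀ θ θ' : Θ, ∀ x,
      sigmaB β V ((P θ) x) ((P θ') x) ≤ L_P * ‖θ.1 - θ'.1‖ * (1 + β * V x))
    (α : ℝ) (hα : α ∈ Set.Ioo γ 1)
    (hsig : ∀ θ, ∀ (μ₁ μ₂ : Measure X) [IsProbabilityMeasure μ₁] [IsProbabilityMeasure μ₂],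
      Integrable V μ₁ → Integrable V μ₂ →
      sigmaB β V (μ₁.bind (P θ)) (μ₂.bind (P θ)) ≤ α * sigmaB β V μ₁ μ₂) :
    ∀ η : SignedMeasure X, Integrable V η.totalVariation → η Set.univ = 0 →
      ∀ n : ℕ, 1 ≤ n → ∀ θ θ' : Θ,
      sigmaS β V (sbind (kpow (P θ) n) η - sbind (kpow (P θ') n) η) ≤
        L_P * ‖θ.1 - θ'.1‖ * (n : ℝ) * α ^ (n - 1) *
          ∫ x, (1 + β * V x) ∂η.totalVariation :=
  iterated_kernel_lipschitz_zero_mass_general P V hVmeas hV0 β hβ γ K hγ hdrift L_P hlip α hα hsig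

end PoissonPaper
end
end

section
/- Set α' = max(1 + βK₁, γ₁), α = α_r^{1/r} and C = α_r^{−1}(α')^{r−1}. Then for every θ ∈ Θ, every integer n ≥ 1, and every measurable φ : X → ℝ with |||φ|||_β < ∞, one has |||P_θ^{*n} φ|||_β ≤ C α^n |||φ|||_β. -/
open MeasureTheory ProbabilityTheory ENNReal

noncomputable section

namespace PoissonPaper

variable {X : Type*} [MeasurableSpace X]

/-!
Write `W = 1 + βV`, so that `d_β(x, y) = W x + W y` off the diagonal. The growth condition
gives `P W ≤ α' W`, and coupling `P(x, ·)` with `P(y, ·)` bounds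
`|Pφ(x) - Pφ(y)| ≤ |||φ|||_β (PW(x) + PW(y)) ≤ α' |||φ|||_β d_β(x, y)`. Writing `n = s + r q` with
`s < r`, the `r`-step contraction applied `q` times and the one-step bound applied `s` times give
`|||P^n φ|||_β ≤ α'^s α_r^q |||φ|||_β`, and `α'^s α_r^q ≤ C α^n` because `α_r^(q+1) ≤ α_r^(n/r)`.
-/

theorem _root_.Set.MapsTo.apply_iterate_le_pow_mul {α : Type*} {f : α → α} {s : Set α}
    (hf : Set.MapsTo f s s) {N : α → ℝ≥0∞} {c : ℝ≥0∞} (h : ∀ a ∈ s, N (f a) ≤ c * N a)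
    (m : ℕ) {a : α} (ha : a ∈ s) : N (f^[m] a) ≤ c ^ m * N a := by
  induction m with
  | zero => simp
  | succ m ih =>
    rw [Function.iterate_succ_apply', pow_succ', mul_assoc]
    exact (h _ (hf.iterate m ha)).trans (mul_le_mul_right ih c)

theorem pow_mod_mul_pow_div_le {a b : ℝ} (ha : 1 ≤ a) (hb₀ : 0 < b) (hb₁ : b ≤ 1)
    {r : ℕ} (hr : 0 < r) (n : ℕ) :
    a ^ (n % r) * b ^ (n / r) ≤ b⁻¹ * a ^ (r - 1) * (b ^ ((1 : ℝ) / r)) ^ n := by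
  have hr' : (0 : ℝ) < r := Nat.cast_pos.mpr hr
  have hroot : b ^ (n / r + 1) ≤ (b ^ ((1 : ℝ) / r)) ^ n := by
    rw [← Real.rpow_natCast _ n, ← Real.rpow_mul hb₀.le, ← Real.rpow_natCast]
    refine Real.rpow_le_rpow_of_exponent_ge hb₀ hb₁ ?_
    rw [one_div_mul_eq_div, div_le_iff₀ hr']
    exact_mod_cast (add_one_mul (n / r) r).symm ▸ (Nat.lt_div_mul_add hr).le
  have hmod : a ^ (n % r) ≤ a ^ (r - 1) :=
    pow_le_pow_right₀ ha (Nat.le_sub_one_of_lt (Nat.mod_lt n hr))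
  calc a ^ (n % r) * b ^ (n / r) = b⁻¹ * (a ^ (n % r) * b ^ (n / r + 1)) := by
        rw [pow_succ]; field_simp
    _ ≤ b⁻¹ * (a ^ (r - 1) * (b ^ ((1 : ℝ) / r)) ^ n) := by gcongr
    _ = b⁻¹ * a ^ (r - 1) * (b ^ ((1 : ℝ) / r)) ^ n := by ring

theorem abs_integral_sub_le_of_abs_sub_le {α : Type*} [MeasurableSpace α] {μ : Measure α}
    [IsProbabilityMeasure μ] {f g : α → ℝ} {c : ℝ} (hf : Integrable f μ) (hg : Integrable g μ)
    (h : ∀ u, |f u - c| ≤ g u) : |∫ u, f u ∂μ - c| ≤ ∫ u, g u ∂μ := by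
  have hsub : ∫ u, f u ∂μ - c = ∫ u, (f u - c) ∂μ := by
    rw [integral_sub hf (integrable_const c), integral_const, probReal_univ, one_smul]
  rw [hsub]
  exact norm_integral_le_of_norm_le hg (ae_of_all _ fun u => (Real.norm_eq_abs _).trans_le (h u))

theorem abs_integral_sub_integral_le {α : Type*} [MeasurableSpace α] {μ ν : Measure α}
    [IsProbabilityMeasure μ] [IsProbabilityMeasure ν] {f g h : α → ℝ}
    (hfμ : Integrable f μ) (hfν : Integrable f ν) (hg : Integrable g μ) (hh : Integrable h ν)
    (hfgh : ∀ u v, |f u - f v| ≤ g u + h v) :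
    |∫ u, f u ∂μ - ∫ v, f v ∂ν| ≤ ∫ u, g u ∂μ + ∫ v, h v ∂ν := by
  have integral_add_const (ρ : Measure α) [IsProbabilityMeasure ρ] (k : α → ℝ)
      (hk : Integrable k ρ) (c : ℝ) : ∫ u, (k u + c) ∂ρ = ∫ u, k u ∂ρ + c := by
    rw [integral_add hk (integrable_const c), integral_const, probReal_univ, one_smul]
  have hinner : ∀ v, |f v - ∫ u, f u ∂μ| ≤ ∫ u, g u ∂μ + h v := fun v => by
    rw [abs_sub_comm, ← integral_add_const μ g hg]
    exact abs_integral_sub_le_of_abs_sub_le hfμ (hg.add (integrable_const _)) (hfgh · v)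
  rw [abs_sub_comm, add_comm, ← integral_add_const ν h hh]
  exact abs_integral_sub_le_of_abs_sub_le hfν (hh.add (integrable_const _))
    fun v => (hinner v).trans_eq (add_comm _ _)

section Oscillation

variable {Y : Type*} {β : ℝ} {V : Y → ℝ}

theorem dBeta_le_add (hβ : 0 ≤ β) (hV0 : ∀ x, 0 ≤ V x) (x y : Y) :
    dBeta β V x y ≤ (1 + β * V x) + (1 + β * V y) := by
  unfold dBeta
  split_ifs
  · have := hV0 x; have := hV0 y; positivity
  · linarith

theorem dBeta_pos (hβ : 0 ≤ β) (hV0 : ∀ x, 0 ≤ V x) {x y : Y} (hxy : x ≠ y) :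
    0 < dBeta β V x y := by
  rw [dBeta, if_neg hxy]
  have := hV0 x; have := hV0 y; positivity

theorem abs_sub_le_osc_mul_dBeta (hβ : 0 ≤ β) (hV0 : ∀ x, 0 ≤ V x) {φ : Y → ℝ}
    (hφ : osc β V φ < ⊤) (x y : Y) : |φ x - φ y| ≤ (osc β V φ).toReal * dBeta β V x y := by
  rcases eq_or_ne x y with rfl | hxy
  · simp [dBeta]
  have hd := dBeta_pos hβ hV0 hxy
  have hle : ENNReal.ofReal (|φ x - φ y| / dBeta β V x y) ≤ osc β V φ :=
    le_iSup₂ (f := fun x y => ENNReal.ofReal (|φ x - φ y| / dBeta β V x y)) x y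
  rw [← div_le_iff₀ hd]
  exact (ENNReal.ofReal_le_iff_le_toReal hφ.ne).mp hle

theorem osc_le_ofReal_of_abs_sub_le (hβ : 0 ≤ β) (hV0 : ∀ x, 0 ≤ V x) {ψ : Y → ℝ} {t : ℝ}
    (h : ∀ x y, x ≠ y → |ψ x - ψ y| ≤ t * dBeta β V x y) : osc β V ψ ≤ ENNReal.ofReal t := by
  refine iSup₂_le fun x y => ?_
  rcases eq_or_ne x y with rfl | hxy
  · simp [dBeta]
  exact ENNReal.ofReal_le_ofReal ((div_le_iff₀ (dBeta_pos hβ hV0 hxy)).mpr (h x y hxy))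

end Oscillation

theorem integrable_of_osc_lt_top {β : ℝ} {V : X → ℝ} {μ : Measure X} [IsFiniteMeasure μ]
    (hβ : 0 ≤ β) (hV0 : ∀ x, 0 ≤ V x) (hV : Integrable V μ) {φ : X → ℝ} (hφm : Measurable φ)
    (hφ : osc β V φ < ⊤) : Integrable φ μ := by
  rcases isEmpty_or_nonempty X with _ | ⟨⟨x₀⟩⟩
  · exact .of_isEmpty
  set M := (osc β V φ).toReal
  have hM : 0 ≤ M := ENNReal.toReal_nonneg
  refine ((integrable_const (|φ x₀| + M * (1 + β * V x₀) + M)).add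
    (hV.const_mul (M * β))).mono' hφm.aestronglyMeasurable (ae_of_all _ fun u => ?_)
  have hu := (abs_sub_le_osc_mul_dBeta hβ hV0 hφ u x₀).trans
    (mul_le_mul_of_nonneg_left (dBeta_le_add hβ hV0 u x₀) hM)
  have := abs_sub_abs_le_abs_sub (φ u) (φ x₀)
  simp only [Real.norm_eq_abs, Pi.add_apply]
  linarith

def oscFinite (β : ℝ) (V : X → ℝ) : Set (X → ℝ) :=
  {φ | Measurable φ ∧ osc β V φ < ⊤}

section Drift

variable {P : Kernel X X} {V : X → ℝ} {γ K : ℝ}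

theorem Drift.mono (hV0 : ∀ x, 0 ≤ V x) (hD : Drift P V γ K) {γ' : ℝ} (hγ : γ ≤ γ') :
    Drift P V γ' K := fun x =>
  (hD x).trans (ENNReal.ofReal_le_ofReal (by nlinarith [hV0 x]))

theorem Drift.integrable (hVm : Measurable V) (hV0 : ∀ x, 0 ≤ V x) (hD : Drift P V γ K)
    (x : X) : Integrable V (P x) := by
  refine ⟨hVm.aestronglyMeasurable, ?_⟩
  rw [hasFiniteIntegral_iff_ofReal (ae_of_all _ hV0)]
  exact (hD x).trans_lt ENNReal.ofReal_lt_top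

theorem Drift.integral_le (hVm : Measurable V) (hV0 : ∀ x, 0 ≤ V x) (hD : Drift P V γ K)
    {x : X} (hx : 0 ≤ γ * V x + K) : ∫ y, V y ∂(P x) ≤ γ * V x + K := by
  rw [integral_eq_lintegral_of_nonneg_ae (ae_of_all _ hV0) hVm.aestronglyMeasurable]
  exact ENNReal.toReal_le_of_le_ofReal hx (hD x)

theorem Drift.integral_weight_le [IsMarkovKernel P] {β : ℝ} (hβ : 0 ≤ β) (hVm : Measurable V)
    (hV0 : ∀ x, 0 ≤ V x) (hD : Drift P V γ K) (hK : 0 ≤ K) (hγ : 1 + β * K ≤ γ) (x : X) :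
    ∫ y, (1 + β * V y) ∂(P x) ≤ γ * (1 + β * V x) := by
  have hγ₀ : 0 ≤ γ := by nlinarith
  have hx := hD.integral_le hVm hV0 (x := x) (by nlinarith [hV0 x])
  rw [integral_add (integrable_const 1) ((hD.integrable hVm hV0 x).const_mul β),
    integral_const, probReal_univ, one_smul, integral_const_mul]
  nlinarith [hV0 x]

theorem measurable_act (P : Kernel X X) {φ : X → ℝ} (hφ : Measurable φ) :
    Measurable (act P φ) :=
  hφ.stronglyMeasurable.integral_kernel.measurable

variable [IsMarkovKernel P] {β : ℝ}

theorem osc_act_le (hβ : 0 ≤ β) (hVm : Measurable V) (hV0 : ∀ x, 0 ≤ V x)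
    (hD : Drift P V γ K) (hK : 0 ≤ K) (hγ : 1 + β * K ≤ γ) {φ : X → ℝ}
    (hφ : φ ∈ oscFinite β V) : osc β V (act P φ) ≤ ENNReal.ofReal γ * osc β V φ := by
  set M := (osc β V φ).toReal
  have hM : 0 ≤ M := ENNReal.toReal_nonneg
  have hφi x : Integrable φ (P x) :=
    integrable_of_osc_lt_top hβ hV0 (hD.integrable hVm hV0 x) hφ.1 hφ.2
  have hWi x : Integrable (fun y => M * (1 + β * V y)) (P x) :=
    ((integrable_const 1).add ((hD.integrable hVm hV0 x).const_mul β)).const_mul M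
  have key x y (hxy : x ≠ y) : |act P φ x - act P φ y| ≤ γ * M * dBeta β V x y := by
    calc |act P φ x - act P φ y|
        ≤ ∫ u, M * (1 + β * V u) ∂(P x) + ∫ v, M * (1 + β * V v) ∂(P y) :=
          abs_integral_sub_integral_le (hφi x) (hφi y) (hWi x) (hWi y) fun u v =>
            (abs_sub_le_osc_mul_dBeta hβ hV0 hφ.2 u v).trans
              ((mul_le_mul_of_nonneg_left (dBeta_le_add hβ hV0 u v) hM).trans_eq (mul_add _ _ _))
      _ ≤ M * (γ * (1 + β * V x)) + M * (γ * (1 + β * V y)) := by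
          rw [integral_const_mul, integral_const_mul]
          gcongr <;> exact hD.integral_weight_le hβ hVm hV0 hK hγ _
      _ = γ * M * dBeta β V x y := by
          rw [dBeta, if_neg hxy]
          ring
  have hγ₀ : 0 ≤ γ := by nlinarith
  calc osc β V (act P φ) ≤ ENNReal.ofReal (γ * M) := osc_le_ofReal_of_abs_sub_le hβ hV0 key
    _ = ENNReal.ofReal γ * osc β V φ := by
        rw [ENNReal.ofReal_mul hγ₀, ENNReal.ofReal_toReal hφ.2.ne]

theorem mapsTo_act_oscFinite (hβ : 0 ≤ β) (hVm : Measurable V) (hV0 : ∀ x, 0 ≤ V x)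
    (hD : Drift P V γ K) (hK : 0 ≤ K) (hγ : 1 + β * K ≤ γ) :
    Set.MapsTo (act P) (oscFinite β V) (oscFinite β V) := fun _ hφ =>
  ⟨measurable_act P hφ.1, (osc_act_le hβ hVm hV0 hD hK hγ hφ).trans_lt
    (ENNReal.mul_lt_top ENNReal.ofReal_lt_top hφ.2)⟩

end Drift

theorem iterated_oscillation_quasi_contraction_general
    {X : Type*} [MeasurableSpace X] {k : ℕ} {Θ : Set (EuclideanSpace ℝ (Fin k))}
    (P : Θ → Kernel X X) [∀ θ, IsMarkovKernel (P θ)]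
    (V : X → ℝ) (hVmeas : Measurable V) (hV0 : ∀ x, 0 ≤ V x)
    (β : ℝ) (hβ : 0 < β)
    (γ₁ K₁ : ℝ) (hK₁ : 0 ≤ K₁) (hgrow : ∀ θ, Drift (P θ) V γ₁ K₁)
    (r : ℕ) (hr : 0 < r)
    (α_r : ℝ) (hαr : α_r ∈ Set.Ioo (0:ℝ) 1)
    (hosc_r : ∀ θ, ∀ φ : X → ℝ, Measurable φ → osc β V φ < ⊤ →
      osc β V ((act (P θ))^[r] φ) ≤ ENNReal.ofReal α_r * osc β V φ)
    (α' α C : ℝ) (hα' : α' = max (1 + β * K₁) γ₁)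
    (hα : α = α_r ^ ((1:ℝ) / (r:ℝ))) (hC : C = α_r⁻¹ * α' ^ (r - 1)) :
    ∀ θ, ∀ n : ℕ, 1 ≤ n → ∀ φ : X → ℝ, Measurable φ → osc β V φ < ⊤ →
      osc β V ((act (P θ))^[n] φ) ≤ ENNReal.ofReal (C * α ^ n) * osc β V φ := by
  intro θ n _ φ hφm hφ
  have hα'K : 1 + β * K₁ ≤ α' := hα' ▸ le_max_left _ _
  have hα'1 : 1 ≤ α' := (le_add_of_nonneg_right (mul_nonneg hβ.le hK₁)).trans hα'K
  have hD : Drift (P θ) V α' K₁ := (hgrow θ).mono hV0 (hα' ▸ le_max_right _ _)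
  have hstep := mapsTo_act_oscFinite hβ.le hVmeas hV0 hD hK₁ hα'K
  have hφ' : φ ∈ oscFinite β V := ⟨hφm, hφ⟩
  have hsplit : (act (P θ))^[n] φ = (act (P θ))^[n % r] (((act (P θ))^[r])^[n / r] φ) := by
    rw [← Function.iterate_mul, ← Function.iterate_add_apply, Nat.mod_add_div]
  rw [hsplit]
  calc _ ≤ ENNReal.ofReal α' ^ (n % r) * osc β V (((act (P θ))^[r])^[n / r] φ) :=
        hstep.apply_iterate_le_pow_mul (fun ψ hψ => osc_act_le hβ.le hVmeas hV0 hD hK₁ hα'K hψ)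
          _ ((hstep.iterate r).iterate _ hφ')
    _ ≤ ENNReal.ofReal α' ^ (n % r) * (ENNReal.ofReal α_r ^ (n / r) * osc β V φ) := by
        gcongr
        exact (hstep.iterate r).apply_iterate_le_pow_mul (fun ψ hψ => hosc_r θ ψ hψ.1 hψ.2) _ hφ'
    _ = ENNReal.ofReal (α' ^ (n % r) * α_r ^ (n / r)) * osc β V φ := by
        rw [ENNReal.ofReal_mul (by positivity), ENNReal.ofReal_pow (by positivity),
          ENNReal.ofReal_pow hαr.1.le, mul_assoc]
    _ ≤ ENNReal.ofReal (C * α ^ n) * osc β V φ := by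
        rw [hC, hα]
        gcongr ENNReal.ofReal ?_ * _
        exact pow_mod_mul_pow_div_le hα'1 hαr.1 hαr.2.le hr n

/-- Geometric decay of the oscillation seminorm of the iterates, under
the `r`-step contraction and a one-step growth condition. -/
theorem iterated_oscillation_quasi_contraction
    {X : Type*} [MeasurableSpace X] {k : ℕ} {Θ : Set (EuclideanSpace ℝ (Fin k))}
    (hΘ : Θ.Nonempty) (P : Θ → Kernel X X) [∀ θ, IsMarkovKernel (P θ)]
    (V : X → ℝ) (hVmeas : Measurable V) (hV0 : ∀ x, 0 ≤ V x)
    (β : ℝ) (hβ : 0 < β)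
    (γ₁ K₁ : ℝ) (hγ₁ : 1 < γ₁) (hK₁ : 0 ≤ K₁) (hgrow : ∀ θ, Drift (P θ) V γ₁ K₁)
    (r : ℕ) (hr : 0 < r)
    (α_r : ℝ) (hαr : α_r ∈ Set.Ioo (0:ℝ) 1)
    (hosc_r : ∀ θ, ∀ φ : X → ℝ, Measurable φ → osc β V φ < ⊤ →
      osc β V ((act (P θ))^[r] φ) ≤ ENNReal.ofReal α_r * osc β V φ)
    (α' α C : ℝ) (hα' : α' = max (1 + β * K₁) γ₁)
    (hα : α = α_r ^ ((1:ℝ) / (r:ℝ))) (hC : C = α_r⁻¹ * α' ^ (r - 1)) :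
    ∀ θ, ∀ n : ℕ, 1 ≤ n → ∀ φ : X → ℝ, Measurable φ → osc β V φ < ⊤ →
      osc β V ((act (P θ))^[n] φ) ≤ ENNReal.ofReal (C * α ^ n) * osc β V φ :=
  iterated_oscillation_quasi_contraction_general P V hVmeas hV0 β hβ γ₁ K₁ hK₁ hgrow r hr α_r hαr
    hosc_r α' α C hα' hα hC

end PoissonPaper
end
end

section
/- Set α' = max(1 + βK₁, γ₁). Then for every α'' > α' there exists a constant L_P'' (depending only on L_P, β, γ₁, K₁ and α'') such that for all integers n ≥ 1, all θ, θ' ∈ Θ, and every probability measure μ on X with ∫ V dμ < ∞, one has σ_β(P_θ^n μ, P_{θ'}^n μ) ≤ L_P'' |θ − θ'| (α'')^n (1 + β ∫ V dμ). -/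
open MeasureTheory ProbabilityTheory ENNReal

noncomputable section

namespace PoissonPaper

variable {X : Type*} [MeasurableSpace X]

/-!
All estimates are made for `∫⁻ (1 + βV) d|η|` in `ℝ≥0∞`, whose real part is `sigmaB`, so no
integrability has to be tracked. The drift condition gives `P_θ (1 + βV) ≤ α' (1 + βV)`. Since
`|ηP| ≤ |η|P`, a step with a common kernel multiplies the weighted variation by at most `α'`, and a
Hahn decomposition of `νP_θ - νP_θ'` shows that changing the kernel costs at most
`L_P |θ - θ'| ∫ (1 + βV) dν`. By the triangle inequality, `s_n = ∫ (1 + βV) d|μP_θ^n - μP_θ'^n|`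
satisfies `s_{n+1} ≤ α' s_n + L_P |θ - θ'| α'^n M` with `M = ∫ (1 + βV) dμ`, and for `α'' > α'`
this recursion is dominated by `α''^n L_P |θ - θ'| M / (α'' - α')`.
-/

section TotalVariation

variable {μ₁ μ₂ μ₃ ν₁ ν₂ : Measure X} [IsFiniteMeasure μ₁] [IsFiniteMeasure μ₂]
  [IsFiniteMeasure μ₃]

lemma tv_eq_variation : tv μ₁ μ₂ = (μ₁.toSignedMeasure - μ₂.toSignedMeasure).variation :=
  SignedMeasure.totalVariation_eq_variation _

lemma tv_self : tv μ₁ μ₁ = 0 := by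
  rw [tv, sub_self, SignedMeasure.totalVariation_zero]

lemma tv_comm : tv μ₁ μ₂ = tv μ₂ μ₁ := by
  rw [tv, ← SignedMeasure.totalVariation_neg, neg_sub, tv]

lemma tv_le_tv_add_tv : tv μ₁ μ₃ ≤ tv μ₁ μ₂ + tv μ₂ μ₃ := by
  simp only [tv_eq_variation]
  rw [← sub_add_sub_cancel _ μ₂.toSignedMeasure]
  exact VectorMeasure.variation_add_le

lemma tv_le_of_add_eq [IsFiniteMeasure ν₁] [IsFiniteMeasure ν₂] (h : μ₁ + ν₂ = μ₂ + ν₁) :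
    tv μ₁ μ₂ ≤ ν₁ + ν₂ := by
  have hsub : μ₁.toSignedMeasure - μ₂.toSignedMeasure =
      ν₁.toSignedMeasure - ν₂.toSignedMeasure := by
    rw [sub_eq_sub_iff_add_eq_add, ← Measure.toSignedMeasure_add, ← Measure.toSignedMeasure_add]
    exact Measure.toSignedMeasure_congr (h.trans (add_comm _ _))
  rw [tv_eq_variation, hsub]
  refine VectorMeasure.variation_sub_le.trans ?_
  simp

lemma tv_le_add_s17 : tv μ₁ μ₂ ≤ μ₁ + μ₂ :=
  tv_le_of_add_eq (add_comm _ _)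

/-- The Jordan decomposition `μ₁ - μ₂ = pos - neg`, rewritten without subtraction. -/
lemma add_negPart_eq :
    μ₁ + (μ₁.toSignedMeasure - μ₂.toSignedMeasure).toJordanDecomposition.negPart =
      μ₂ + (μ₁.toSignedMeasure - μ₂.toSignedMeasure).toJordanDecomposition.posPart := by
  set j := (μ₁.toSignedMeasure - μ₂.toSignedMeasure).toJordanDecomposition
  have hj : j.posPart.toSignedMeasure - j.negPart.toSignedMeasure =
      μ₁.toSignedMeasure - μ₂.toSignedMeasure :=
    SignedMeasure.toSignedMeasure_toJordanDecomposition _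
  rw [← Measure.toSignedMeasure_eq_toSignedMeasure_iff, Measure.toSignedMeasure_add,
    Measure.toSignedMeasure_add]
  rw [sub_eq_sub_iff_add_eq_add] at hj
  exact hj.symm.trans (add_comm _ _)

lemma le_add_tv : μ₁ ≤ μ₂ + tv μ₁ μ₂ :=
  calc μ₁ ≤ μ₁ + (μ₁.toSignedMeasure - μ₂.toSignedMeasure).toJordanDecomposition.negPart :=
        Measure.le_add_right le_rfl
    _ = μ₂ + (μ₁.toSignedMeasure - μ₂.toSignedMeasure).toJordanDecomposition.posPart :=
        add_negPart_eq
    _ ≤ μ₂ + tv μ₁ μ₂ := add_le_add le_rfl (Measure.le_add_right le_rfl)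

lemma le_add_tv' : μ₂ ≤ μ₁ + tv μ₁ μ₂ := by
  rw [tv_comm]
  exact le_add_tv

/-- Hahn decomposition of `μ₁ - μ₂`: on `s` the difference is `|μ₁ - μ₂|`, on `sᶜ` its negative. -/
lemma exists_restrict_eq_add_tv : ∃ s, MeasurableSet s ∧
    μ₁.restrict s = μ₂.restrict s + (tv μ₁ μ₂).restrict s ∧
    μ₂.restrict sᶜ = μ₁.restrict sᶜ + (tv μ₁ μ₂).restrict sᶜ := by
  set j := (μ₁.toSignedMeasure - μ₂.toSignedMeasure).toJordanDecomposition
  obtain ⟨t, ht, hpos, hneg⟩ := j.mutuallySingular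
  have hbal : μ₁ + j.negPart = μ₂ + j.posPart := add_negPart_eq
  have htv : tv μ₁ μ₂ = j.posPart + j.negPart := rfl
  refine ⟨tᶜ, ht.compl, ?_, ?_⟩
  · have h := congrArg (·.restrict tᶜ) hbal
    simpa [Measure.restrict_add, Measure.restrict_eq_zero.mpr hneg, htv] using h
  · have h := congrArg (·.restrict t) hbal
    simpa [Measure.restrict_add, Measure.restrict_eq_zero.mpr hpos, htv, eq_comm] using h

end TotalVariation

section Kernel

variable {P Q : Kernel X X} {f : X → ℝ≥0∞}

lemma bind_kpow_zero (μ : Measure X) : μ.bind (kpow P 0) = μ := by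
  rw [kpow, Measure.id_comp]

lemma bind_kpow_succ (μ : Measure X) (n : ℕ) :
    μ.bind (kpow P (n + 1)) = (μ.bind (kpow P n)).bind P := by
  rw [Measure.bind_bind (kpow P n).measurable.aemeasurable P.measurable.aemeasurable]
  rfl

lemma setLIntegral_bind (hf : Measurable f) {s : Set X} (hs : MeasurableSet s) (μ : Measure X) :
    ∫⁻ y in s, f y ∂(μ.bind P) = ∫⁻ x, ∫⁻ y in s, f y ∂(P x) ∂μ := by
  simp_rw [← lintegral_indicator hs]
  exact Measure.lintegral_bind P.measurable.aemeasurable (hf.indicator hs).aemeasurable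

lemma lintegral_bind_le_mul {c : ℝ≥0∞} (hf : Measurable f) (h : ∀ x, ∫⁻ y, f y ∂(P x) ≤ c * f x)
    (μ : Measure X) : ∫⁻ y, f y ∂(μ.bind P) ≤ c * ∫⁻ x, f x ∂μ := by
  rw [Measure.lintegral_bind P.measurable.aemeasurable hf.aemeasurable, ← lintegral_const_mul c hf]
  exact lintegral_mono h

lemma lintegral_bind_kpow_le_mul {c : ℝ≥0∞} (hf : Measurable f)
    (h : ∀ x, ∫⁻ y, f y ∂(P x) ≤ c * f x) (μ : Measure X) (n : ℕ) :
    ∫⁻ y, f y ∂(μ.bind (kpow P n)) ≤ c ^ n * ∫⁻ x, f x ∂μ := by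
  induction n with
  | zero => rw [bind_kpow_zero, pow_zero, one_mul]
  | succ n ih =>
    rw [bind_kpow_succ, pow_succ', mul_assoc]
    exact (lintegral_bind_le_mul hf h _).trans (by gcongr)

lemma tv_bind_le [IsMarkovKernel P] (μ₁ μ₂ : Measure X) [IsFiniteMeasure μ₁]
    [IsFiniteMeasure μ₂] : tv (μ₁.bind P) (μ₂.bind P) ≤ (tv μ₁ μ₂).bind P := by
  set j := (μ₁.toSignedMeasure - μ₂.toSignedMeasure).toJordanDecomposition
  have hbal : μ₁.bind P + j.negPart.bind P = μ₂.bind P + j.posPart.bind P := by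
    rw [← Measure.comp_add, ← Measure.comp_add, add_negPart_eq]
  calc tv (μ₁.bind P) (μ₂.bind P) ≤ j.posPart.bind P + j.negPart.bind P := tv_le_of_add_eq hbal
    _ = (tv μ₁ μ₂).bind P := (Measure.comp_add ..).symm

lemma lintegral_le_of_restrict_bind_eq_add [IsSFiniteKernel Q] {μ : Measure X}
    (hf : Measurable f) {s : Set X} (hs : MeasurableSet s) {ρ : Measure X} {τ : X → Measure X}
    (hρ : (μ.bind P).restrict s = (μ.bind Q).restrict s + ρ) (hPQ : ∀ x, P x ≤ Q x + τ x)
    (hQ : ∫⁻ y, f y ∂(μ.bind Q) ≠ ∞) :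
    ∫⁻ y, f y ∂ρ ≤ ∫⁻ x, ∫⁻ y in s, f y ∂(τ x) ∂μ := by
  have hQs : ∫⁻ y in s, f y ∂(μ.bind Q) ≠ ∞ :=
    ne_top_of_le_ne_top hQ (setLIntegral_le_lintegral _ _)
  refine (ENNReal.add_le_add_iff_left hQs).1 ?_
  calc ∫⁻ y in s, f y ∂(μ.bind Q) + ∫⁻ y, f y ∂ρ = ∫⁻ y in s, f y ∂(μ.bind P) := by
        rw [hρ, lintegral_add_measure]
    _ = ∫⁻ x, ∫⁻ y in s, f y ∂(P x) ∂μ := setLIntegral_bind hf hs μ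
    _ ≤ ∫⁻ x, (∫⁻ y in s, f y ∂(Q x) + ∫⁻ y in s, f y ∂(τ x)) ∂μ := by
        refine lintegral_mono fun x => ?_
        rw [← lintegral_add_measure, ← Measure.restrict_add]
        exact lintegral_mono' (Measure.restrict_mono le_rfl (hPQ x)) le_rfl
    _ = ∫⁻ y in s, f y ∂(μ.bind Q) + ∫⁻ x, ∫⁻ y in s, f y ∂(τ x) ∂μ := by
        rw [lintegral_add_left (hf.setLIntegral_kernel hs), setLIntegral_bind hf hs μ]

lemma lintegral_tv_bind_le [IsMarkovKernel P] [IsMarkovKernel Q] {μ : Measure X}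
    [IsFiniteMeasure μ] (hf : Measurable f) (hP : ∫⁻ y, f y ∂(μ.bind P) ≠ ∞)
    (hQ : ∫⁻ y, f y ∂(μ.bind Q) ≠ ∞) :
    ∫⁻ y, f y ∂(tv (μ.bind P) (μ.bind Q)) ≤ ∫⁻ x, ∫⁻ y, f y ∂(tv (P x) (Q x)) ∂μ := by
  obtain ⟨s, hs, hPs, hQs⟩ := exists_restrict_eq_add_tv (μ₁ := μ.bind P) (μ₂ := μ.bind Q)
  calc ∫⁻ y, f y ∂(tv (μ.bind P) (μ.bind Q))
      = ∫⁻ y in s, f y ∂(tv (μ.bind P) (μ.bind Q)) +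
          ∫⁻ y in sᶜ, f y ∂(tv (μ.bind P) (μ.bind Q)) := (lintegral_add_compl f hs).symm
    _ ≤ ∫⁻ x, ∫⁻ y in s, f y ∂(tv (P x) (Q x)) ∂μ +
          ∫⁻ x, ∫⁻ y in sᶜ, f y ∂(tv (P x) (Q x)) ∂μ :=
        add_le_add (lintegral_le_of_restrict_bind_eq_add hf hs hPs (fun _ => le_add_tv) hQ)
          (lintegral_le_of_restrict_bind_eq_add hf hs.compl hQs (fun _ => le_add_tv') hP)
    _ ≤ ∫⁻ x, ∫⁻ y, f y ∂(tv (P x) (Q x)) ∂μ := by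
        refine (le_lintegral_add _ _).trans_eq ?_
        simp_rw [lintegral_add_compl f hs]

lemma lintegral_tv_bind_bind_le [IsMarkovKernel P] [IsMarkovKernel Q] {a c : ℝ≥0∞}
    (hf : Measurable f) (hPf : ∀ x, ∫⁻ y, f y ∂(P x) ≤ a * f x)
    (hQf : ∀ x, ∫⁻ y, f y ∂(Q x) ≤ a * f x)
    (hPQ : ∀ x, ∫⁻ y, f y ∂(tv (P x) (Q x)) ≤ c * f x) (ha : a ≠ ∞)
    (ν ν' : Measure X) [IsFiniteMeasure ν] [IsFiniteMeasure ν'] (hν' : ∫⁻ x, f x ∂ν' ≠ ∞) :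
    ∫⁻ y, f y ∂(tv (ν.bind P) (ν'.bind Q)) ≤
      a * ∫⁻ x, f x ∂(tv ν ν') + c * ∫⁻ x, f x ∂ν' := by
  have hfin : ∀ {R : Kernel X X}, (∀ x, ∫⁻ y, f y ∂(R x) ≤ a * f x) →
      ∫⁻ y, f y ∂(ν'.bind R) ≠ ∞ := fun hR =>
    ne_top_of_le_ne_top (ENNReal.mul_ne_top ha hν') (lintegral_bind_le_mul hf hR ν')
  calc ∫⁻ y, f y ∂(tv (ν.bind P) (ν'.bind Q))
      ≤ ∫⁻ y, f y ∂(tv (ν.bind P) (ν'.bind P)) + ∫⁻ y, f y ∂(tv (ν'.bind P) (ν'.bind Q)) := by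
        rw [← lintegral_add_measure]
        exact lintegral_mono' tv_le_tv_add_tv le_rfl
    _ ≤ ∫⁻ y, f y ∂((tv ν ν').bind P) + ∫⁻ x, ∫⁻ y, f y ∂(tv (P x) (Q x)) ∂ν' :=
        add_le_add (lintegral_mono' (tv_bind_le ν ν') le_rfl)
          (lintegral_tv_bind_le hf (hfin hPf) (hfin hQf))
    _ ≤ a * ∫⁻ x, f x ∂(tv ν ν') + c * ∫⁻ x, f x ∂ν' := by
        refine add_le_add (lintegral_bind_le_mul hf hPf _) ?_
        rw [← lintegral_const_mul c hf]
        exact lintegral_mono hPQ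

lemma lintegral_tv_bind_kpow_le [IsMarkovKernel P] [IsMarkovKernel Q] {a b c : ℝ≥0∞}
    (hf : Measurable f) (hPf : ∀ x, ∫⁻ y, f y ∂(P x) ≤ a * f x)
    (hQf : ∀ x, ∫⁻ y, f y ∂(Q x) ≤ a * f x)
    (hPQ : ∀ x, ∫⁻ y, f y ∂(tv (P x) (Q x)) ≤ c * f x) (hab : a < b) (hb : b ≠ ∞)
    (μ : Measure X) [IsFiniteMeasure μ] (hμ : ∫⁻ x, f x ∂μ ≠ ∞) (n : ℕ) :
    ∫⁻ y, f y ∂(tv (μ.bind (kpow P n)) (μ.bind (kpow Q n))) ≤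
      b ^ n * ((c * ∫⁻ x, f x ∂μ) / (b - a)) := by
  set D := (c * ∫⁻ x, f x ∂μ) / (b - a)
  have ha : a ≠ ∞ := ne_top_of_lt hab
  -- `D` is where the affine recursion `s ↦ a * s + c * ∫⁻ f ∂μ` gains exactly the factor `b`.
  have hD : a * D + c * ∫⁻ x, f x ∂μ = b * D := by
    rw [← ENNReal.mul_div_cancel (tsub_pos_of_lt hab).ne' (ENNReal.sub_ne_top hb)
      (a := b - a) (b := c * ∫⁻ x, f x ∂μ), ← add_mul, add_tsub_cancel_of_le hab.le]
  induction n with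
  | zero => simp only [bind_kpow_zero, tv_self, lintegral_zero_measure, zero_le]
  | succ n ih =>
    have hmass := lintegral_bind_kpow_le_mul hf hQf μ n
    simp only [bind_kpow_succ]
    calc _ ≤ a * ∫⁻ y, f y ∂(tv (μ.bind (kpow P n)) (μ.bind (kpow Q n))) +
            c * ∫⁻ y, f y ∂(μ.bind (kpow Q n)) :=
          lintegral_tv_bind_bind_le hf hPf hQf hPQ ha _ _
            (ne_top_of_le_ne_top (ENNReal.mul_ne_top (ENNReal.pow_ne_top ha) hμ) hmass)
      _ ≤ a * (b ^ n * D) + c * (b ^ n * ∫⁻ x, f x ∂μ) := by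
          gcongr
          exact hmass.trans (by gcongr)
      _ = b ^ (n + 1) * D := by rw [pow_succ, mul_assoc, ← hD]; ring

end Kernel

section Weight

variable {β : ℝ} {V : X → ℝ}

lemma Drift.lintegral_weight_le {P : Kernel X X} [IsMarkovKernel P] {γ K a : ℝ}
    (hd : Drift P V γ K) (hV0 : ∀ x, 0 ≤ V x) (hβ : 0 ≤ β) (hK : 0 ≤ K) (hγa : γ ≤ a)
    (hKa : 1 + β * K ≤ a) (x : X) :
    ∫⁻ y, ENNReal.ofReal (1 + β * V y) ∂(P x) ≤
      ENNReal.ofReal a * ENNReal.ofReal (1 + β * V x) := by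
  have ha : 0 ≤ a := by nlinarith [mul_nonneg hβ hK]
  have hsplit : ∀ y, ENNReal.ofReal (1 + β * V y) = 1 + ENNReal.ofReal β * ENNReal.ofReal (V y) :=
    fun y => by
      rw [ENNReal.ofReal_add zero_le_one (mul_nonneg hβ (hV0 y)), ENNReal.ofReal_mul hβ,
        ENNReal.ofReal_one]
  calc ∫⁻ y, ENNReal.ofReal (1 + β * V y) ∂(P x)
      = 1 + ENNReal.ofReal β * ∫⁻ y, ENNReal.ofReal (V y) ∂(P x) := by
        simp_rw [hsplit]
        rw [lintegral_add_left measurable_const, lintegral_const_mul' _ _ ENNReal.ofReal_ne_top,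
          lintegral_const, measure_univ, mul_one]
    _ ≤ 1 + ENNReal.ofReal β * ENNReal.ofReal (a * V x + K) := by
        gcongr
        exact (hd x).trans (ENNReal.ofReal_le_ofReal (by nlinarith [hV0 x]))
    _ = ENNReal.ofReal (1 + β * (a * V x + K)) := by
        rw [← ENNReal.ofReal_mul hβ, ← ENNReal.ofReal_one,
          ← ENNReal.ofReal_add zero_le_one (mul_nonneg hβ (add_nonneg (mul_nonneg ha (hV0 x)) hK))]
    _ ≤ ENNReal.ofReal (a * (1 + β * V x)) :=
        ENNReal.ofReal_le_ofReal (by nlinarith [mul_nonneg hβ (hV0 x)])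
    _ = ENNReal.ofReal a * ENNReal.ofReal (1 + β * V x) := ENNReal.ofReal_mul ha

lemma lintegral_weight_eq {μ : Measure X} [IsProbabilityMeasure μ] (hW : ∀ x, 0 ≤ 1 + β * V x)
    (hVμ : Integrable V μ) :
    ∫⁻ x, ENNReal.ofReal (1 + β * V x) ∂μ = ENNReal.ofReal (1 + β * ∫ x, V x ∂μ) := by
  have hint : Integrable (fun x => 1 + β * V x) μ := (integrable_const 1).add (hVμ.const_mul β)
  rw [← ofReal_integral_eq_lintegral_ofReal hint (ae_of_all _ hW),
    integral_add (integrable_const 1) (hVμ.const_mul β), integral_const, integral_const_mul]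
  simp

variable (hV : Measurable V) (hW : ∀ x, 0 ≤ 1 + β * V x) {μ₁ μ₂ : Measure X}
  [IsFiniteMeasure μ₁] [IsFiniteMeasure μ₂]
include hV hW

lemma sigmaB_eq_toReal :
    sigmaB β V μ₁ μ₂ = (∫⁻ x, ENNReal.ofReal (1 + β * V x) ∂(tv μ₁ μ₂)).toReal :=
  integral_eq_lintegral_of_nonneg_ae (ae_of_all _ hW) (by fun_prop : Measurable fun x =>
    1 + β * V x).aestronglyMeasurable

lemma sigmaB_le_of_lintegral_tv_le {r : ℝ} (hr : 0 ≤ r)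
    (h : ∫⁻ x, ENNReal.ofReal (1 + β * V x) ∂(tv μ₁ μ₂) ≤ ENNReal.ofReal r) :
    sigmaB β V μ₁ μ₂ ≤ r := by
  rw [sigmaB_eq_toReal hV hW]
  exact ENNReal.toReal_le_of_le_ofReal hr h

lemma lintegral_tv_le_of_sigmaB_le {r : ℝ} (h₁ : ∫⁻ x, ENNReal.ofReal (1 + β * V x) ∂μ₁ ≠ ∞)
    (h₂ : ∫⁻ x, ENNReal.ofReal (1 + β * V x) ∂μ₂ ≠ ∞) (h : sigmaB β V μ₁ μ₂ ≤ r) :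
    ∫⁻ x, ENNReal.ofReal (1 + β * V x) ∂(tv μ₁ μ₂) ≤ ENNReal.ofReal r := by
  have hfin : ∫⁻ x, ENNReal.ofReal (1 + β * V x) ∂(tv μ₁ μ₂) ≠ ∞ := by
    refine ne_top_of_le_ne_top ?_ (lintegral_mono' tv_le_add_s17 le_rfl)
    rw [lintegral_add_measure]
    exact ENNReal.add_ne_top.2 ⟨h₁, h₂⟩
  rw [← ENNReal.ofReal_toReal hfin, ← sigmaB_eq_toReal hV hW]
  exact ENNReal.ofReal_le_ofReal h

lemma lintegral_tv_kernel_le_of_sigmaB_le {P Q : Kernel X X} [IsMarkovKernel P]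
    [IsMarkovKernel Q] {a c : ℝ} (hc : 0 ≤ c)
    (hPf : ∀ x, ∫⁻ y, ENNReal.ofReal (1 + β * V y) ∂(P x) ≤
      ENNReal.ofReal a * ENNReal.ofReal (1 + β * V x))
    (hQf : ∀ x, ∫⁻ y, ENNReal.ofReal (1 + β * V y) ∂(Q x) ≤
      ENNReal.ofReal a * ENNReal.ofReal (1 + β * V x))
    (hPQ : ∀ x, sigmaB β V (P x) (Q x) ≤ c * (1 + β * V x)) (x : X) :
    ∫⁻ y, ENNReal.ofReal (1 + β * V y) ∂(tv (P x) (Q x)) ≤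
      ENNReal.ofReal c * ENNReal.ofReal (1 + β * V x) := by
  rw [← ENNReal.ofReal_mul hc]
  exact lintegral_tv_le_of_sigmaB_le hV hW (ne_top_of_le_ne_top (by finiteness) (hPf x))
    (ne_top_of_le_ne_top (by finiteness) (hQf x)) (hPQ x)

end Weight

theorem iterated_kernel_lipschitz_growth_general
    {X : Type*} [MeasurableSpace X] {k : ℕ} {Θ : Set (EuclideanSpace ℝ (Fin k))}
    (P : Θ → Kernel X X) [∀ θ, IsMarkovKernel (P θ)]
    (V : X → ℝ) (hVmeas : Measurable V) (hV0 : ∀ x, 0 ≤ V x)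
    (β : ℝ) (hβ : 0 < β)
    (γ₁ K₁ : ℝ) (hK₁ : 0 ≤ K₁) (hgrow : ∀ θ, Drift (P θ) V γ₁ K₁)
    (L_P : ℝ)
    (hlip : ∀ θ θ' : Θ, ∀ x,
      sigmaB β V ((P θ) x) ((P θ') x) ≤ L_P * ‖θ.1 - θ'.1‖ * (1 + β * V x))
    (α' : ℝ) (hα' : α' = max (1 + β * K₁) γ₁) :
    ∀ α'' : ℝ, α' < α'' →
      ∃ L_P'' : ℝ, ∀ n : ℕ, 1 ≤ n → ∀ θ θ' : Θ,
        ∀ (μ : Measure X) [IsProbabilityMeasure μ], Integrable V μ →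
        sigmaB β V (μ.bind (kpow (P θ) n)) (μ.bind (kpow (P θ') n)) ≤
          L_P'' * ‖θ.1 - θ'.1‖ * α'' ^ n * (1 + β * ∫ x, V x ∂μ) := by
  intro α'' hα''
  have hKα : 1 + β * K₁ ≤ α' := hα' ▸ le_max_left _ _
  have hα'1 : 1 ≤ α' := by nlinarith [mul_nonneg hβ.le hK₁]
  have hW : ∀ x, 0 ≤ 1 + β * V x := fun x => by nlinarith [mul_nonneg hβ.le (hV0 x)]
  have hdrift : ∀ ϑ x, ∫⁻ y, ENNReal.ofReal (1 + β * V y) ∂(P ϑ x) ≤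
      ENNReal.ofReal α' * ENNReal.ofReal (1 + β * V x) := fun ϑ =>
    (hgrow ϑ).lintegral_weight_le hV0 hβ.le hK₁ (hα' ▸ le_max_right _ _) hKα
  refine ⟨max L_P 0 / (α'' - α'), fun n _ θ θ' μ _ hVμ => ?_⟩
  set c := max L_P 0 * ‖θ.1 - θ'.1‖ with hc_def
  have hc : 0 ≤ c := by positivity
  have hM : 0 ≤ 1 + β * ∫ x, V x ∂μ :=
    add_nonneg zero_le_one (mul_nonneg hβ.le (integral_nonneg hV0))
  have hα''n : 0 ≤ α'' ^ n := pow_nonneg (by linarith) n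
  have hlipW := lintegral_tv_kernel_le_of_sigmaB_le hVmeas hW hc (hdrift θ) (hdrift θ')
    fun x => (hlip θ θ' x).trans <| mul_le_mul_of_nonneg_right
      (mul_le_mul_of_nonneg_right (le_max_left _ _) (norm_nonneg _)) (hW x)
  have key := lintegral_tv_bind_kpow_le (by fun_prop) (hdrift θ) (hdrift θ') hlipW
    ((ENNReal.ofReal_lt_ofReal_iff (by linarith)).2 hα'') ENNReal.ofReal_ne_top μ
    (by rw [lintegral_weight_eq hW hVμ]; exact ENNReal.ofReal_ne_top) n
  rw [lintegral_weight_eq hW hVμ, ← ENNReal.ofReal_sub _ (by linarith), ← ENNReal.ofReal_mul hc,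
    ← ENNReal.ofReal_div_of_pos (sub_pos.2 hα''), ← ENNReal.ofReal_pow (by linarith),
    ← ENNReal.ofReal_mul hα''n] at key
  refine (sigmaB_le_of_lintegral_tv_le hVmeas hW
    (mul_nonneg hα''n (div_nonneg (mul_nonneg hc hM) (sub_nonneg.2 hα''.le))) key).trans_eq ?_
  rw [hc_def]
  ring

/-- Lipschitz continuity in the parameter of the iterated kernels under
the one-step growth condition only, with geometric loss `(α'')^n`. -/
theorem iterated_kernel_lipschitz_growth
    {X : Type*} [MeasurableSpace X] {k : ℕ} {Θ : Set (EuclideanSpace ℝ (Fin k))}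
    (hΘ : Θ.Nonempty) (P : Θ → Kernel X X) [∀ θ, IsMarkovKernel (P θ)]
    (V : X → ℝ) (hVmeas : Measurable V) (hV0 : ∀ x, 0 ≤ V x)
    (β : ℝ) (hβ : 0 < β)
    (γ₁ K₁ : ℝ) (hγ₁ : 1 < γ₁) (hK₁ : 0 ≤ K₁) (hgrow : ∀ θ, Drift (P θ) V γ₁ K₁)
    (L_P : ℝ)
    (hlip : ∀ θ θ' : Θ, ∀ x,
      sigmaB β V ((P θ) x) ((P θ') x) ≤ L_P * ‖θ.1 - θ'.1‖ * (1 + β * V x))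
    (α' : ℝ) (hα' : α' = max (1 + β * K₁) γ₁) :
    ∀ α'' : ℝ, α' < α'' →
      ∃ L_P'' : ℝ, ∀ n : ℕ, 1 ≤ n → ∀ θ θ' : Θ,
        ∀ (μ : Measure X) [IsProbabilityMeasure μ], Integrable V μ →
        sigmaB β V (μ.bind (kpow (P θ) n)) (μ.bind (kpow (P θ') n)) ≤
          L_P'' * ‖θ.1 - θ'.1‖ * α'' ^ n * (1 + β * ∫ x, V x ∂μ) :=
  iterated_kernel_lipschitz_growth_general P V hVmeas hV0 β hβ γ₁ K₁ hK₁ hgrow L_P hlip α' hα'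

end PoissonPaper
end
end

section
/- Then there exist a positive integer r, constants γ_r ∈ (0, 1), K_r ≥ 0, γ₁ > 1 and K₁ ≥ 0 such that for all θ ∈ Θ and all x ∈ X: (P_θ^{*r} V)(x) ≤ γ_r V(x) + K_r (uniform drift condition for the r-step kernels) and (P_θ* V)(x) ≤ γ₁ V(x) + K₁ (uniform one-step growth condition). -/
open MeasureTheory ProbabilityTheory ENNReal

noncomputable section

namespace PoissonPaper

variable {X : Type*} [MeasurableSpace X]

/-!
Iterating the drift condition of `V_θ` contracts its linear part to `γ ^ r`, while passing
between `V_θ` and `V` through `a V + b ≤ V_θ ≤ c V + d` costs a factor `c / a`.  Choosing `r`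
with `γ ^ r < a / c` gives the uniform `r`-step drift for `V`; the one-step growth bound is the
same comparison applied to the one-step drift.
-/

namespace Drift

variable {P Q : Kernel X X} {V W : X → ℝ} {γ K : ℝ}

theorem mono_s19 {γ' K' : ℝ} (h : Drift P V γ K) (hV0 : ∀ x, 0 ≤ V x) (hγ : γ ≤ γ') (hK : K ≤ K') :
    Drift P V γ' K' := fun x =>
  (h x).trans <| ENNReal.ofReal_le_ofReal <|
    add_le_add (mul_le_mul_of_nonneg_right hγ (hV0 x)) hK

theorem id (hW : Measurable W) : Drift Kernel.id W 1 0 := fun x => by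
  rw [Kernel.id_apply, lintegral_dirac' x hW.ennreal_ofReal, one_mul, add_zero]

theorem comp [IsMarkovKernel Q] {γ₁ K₁ γ₂ K₂ : ℝ} (hP : Drift P W γ₁ K₁) (hQ : Drift Q W γ₂ K₂)
    (hW : Measurable W) (hW0 : ∀ x, 0 ≤ W x) (hγ₁ : 0 ≤ γ₁) (hK₁ : 0 ≤ K₁) (hγ₂ : 0 ≤ γ₂)
    (hK₂ : 0 ≤ K₂) : Drift (P ∘ₖ Q) W (γ₁ * γ₂) (γ₁ * K₂ + K₁) := fun x =>
  calc ∫⁻ y, ENNReal.ofReal (W y) ∂(P ∘ₖ Q) x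
      = ∫⁻ z, ∫⁻ y, ENNReal.ofReal (W y) ∂P z ∂Q x :=
        Kernel.lintegral_comp _ _ _ hW.ennreal_ofReal
    _ ≤ ∫⁻ z, ENNReal.ofReal γ₁ * ENNReal.ofReal (W z) + ENNReal.ofReal K₁ ∂Q x :=
        lintegral_mono fun z => (hP z).trans_eq <| by
          rw [ENNReal.ofReal_add (mul_nonneg hγ₁ (hW0 z)) hK₁, ENNReal.ofReal_mul hγ₁]
    _ = ENNReal.ofReal γ₁ * ∫⁻ z, ENNReal.ofReal (W z) ∂Q x + ENNReal.ofReal K₁ := by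
        rw [lintegral_add_right _ measurable_const,
          lintegral_const_mul' _ _ ENNReal.ofReal_ne_top, lintegral_const, measure_univ, mul_one]
    _ ≤ ENNReal.ofReal γ₁ * ENNReal.ofReal (γ₂ * W x + K₂) + ENNReal.ofReal K₁ := by
        gcongr; exact hQ x
    _ = ENNReal.ofReal (γ₁ * γ₂ * W x + (γ₁ * K₂ + K₁)) := by
        rw [← ENNReal.ofReal_mul hγ₁,
          ← ENNReal.ofReal_add (mul_nonneg hγ₁ (by positivity [hW0 x])) hK₁]
        ring_nf

theorem kpow [IsMarkovKernel P] (h : Drift P W γ K) (hW : Measurable W) (hW0 : ∀ x, 0 ≤ W x)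
    (hγ : 0 ≤ γ) (hK : 0 ≤ K) :
    ∀ n, Drift (PoissonPaper.kpow P n) W (γ ^ n) (K * ∑ i ∈ Finset.range n, γ ^ i)
  | 0 => by simpa [PoissonPaper.kpow] using Drift.id hW
  | n + 1 => by
    have hsum : 0 ≤ K * ∑ i ∈ Finset.range n, γ ^ i :=
      mul_nonneg hK (Finset.sum_nonneg fun i _ => pow_nonneg hγ i)
    convert h.comp (kpow h hW hW0 hγ hK n) hW hW0 hγ hK (pow_nonneg hγ n) hsum using 1
    · rfl
    · ring
    · rw [geom_sum_succ]; ring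

theorem of_affine_sandwich [IsMarkovKernel P] {a b c d : ℝ} (h : Drift P W γ K)
    (hW0 : ∀ x, 0 ≤ W x) (hγ : 0 ≤ γ) (hK : 0 ≤ K) (ha : 0 < a)
    (hlow : ∀ x, a * V x + b ≤ W x) (hup : ∀ x, W x ≤ c * V x + d) :
    Drift P V (γ * c / a) ((γ * |d| + K + |b|) / a) := fun x => by
  have hscaled : ENNReal.ofReal a * ∫⁻ y, ENNReal.ofReal (V y) ∂P x
      ≤ ENNReal.ofReal (γ * W x + K + |b|) :=
    calc ENNReal.ofReal a * ∫⁻ y, ENNReal.ofReal (V y) ∂P x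
        = ∫⁻ y, ENNReal.ofReal (a * V y) ∂P x := by
          rw [← lintegral_const_mul' _ _ ENNReal.ofReal_ne_top]
          simp only [ENNReal.ofReal_mul ha.le]
      _ ≤ ∫⁻ y, ENNReal.ofReal (W y) + ENNReal.ofReal |b| ∂P x :=
          lintegral_mono fun y => (ENNReal.ofReal_le_ofReal
            (by linarith [hlow y, neg_abs_le b])).trans ENNReal.ofReal_add_le
      _ = ∫⁻ y, ENNReal.ofReal (W y) ∂P x + ENNReal.ofReal |b| := by
          rw [lintegral_add_right _ measurable_const, lintegral_const, measure_univ, mul_one]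
      _ ≤ ENNReal.ofReal (γ * W x + K) + ENNReal.ofReal |b| := by gcongr; exact h x
      _ = ENNReal.ofReal (γ * W x + K + |b|) :=
          (ENNReal.ofReal_add (by positivity [hW0 x]) (abs_nonneg b)).symm
  have hrhs : γ * c / a * V x + (γ * |d| + K + |b|) / a
      = (γ * c * V x + γ * |d| + K + |b|) / a := by ring
  rw [hrhs, ENNReal.ofReal_div_of_pos ha, ENNReal.le_div_iff_mul_le
    (Or.inl (ENNReal.ofReal_pos.mpr ha).ne') (Or.inl ENNReal.ofReal_ne_top), mul_comm]
  refine hscaled.trans (ENNReal.ofReal_le_ofReal ?_)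
  linarith [mul_le_mul_of_nonneg_left (hup x) hγ, mul_le_mul_of_nonneg_left (le_abs_self d) hγ]

end Drift

theorem uniform_drift_of_individual_drifts_general
    {X : Type*} [MeasurableSpace X] {k : ℕ} {Θ : Set (EuclideanSpace ℝ (Fin k))}
    (P : Θ → Kernel X X) [∀ θ, IsMarkovKernel (P θ)]
    (Vθ : Θ → X → ℝ) (hVθmeas : ∀ θ, Measurable (Vθ θ)) (hVθ0 : ∀ θ x, 0 ≤ Vθ θ x)
    (γ K : ℝ) (hγ : γ ∈ Set.Ioo (0:ℝ) 1) (hK : 0 ≤ K)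
    (hdrift : ∀ θ, Drift (P θ) (Vθ θ) γ K)
    (V : X → ℝ) (hV0 : ∀ x, 0 ≤ V x)
    (a b c d : ℝ) (ha : 0 < a) (hc : 0 < c)
    (hsandwich : ∀ θ x, a * V x + b ≤ Vθ θ x ∧ Vθ θ x ≤ c * V x + d) :
    ∃ r : ℕ, 0 < r ∧ ∃ γr ∈ Set.Ioo (0:ℝ) 1, ∃ Kr ≥ (0:ℝ), ∃ γ₁ > (1:ℝ), ∃ K₁ ≥ (0:ℝ),
      ∀ θ, Drift (kpow (P θ) r) V γr Kr ∧ Drift (P θ) V γ₁ K₁ := by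
  obtain ⟨hγ0, hγ1⟩ := hγ
  obtain ⟨n, hn⟩ := exists_pow_lt_of_lt_one (div_pos ha hc) hγ1
  have hcontract : γ ^ (n + 1) * c < a :=
    (lt_div_iff₀ hc).mp ((pow_le_pow_of_le_one hγ0.le hγ1.le n.le_succ).trans_lt hn)
  have hsum : 0 ≤ K * ∑ i ∈ Finset.range (n + 1), γ ^ i :=
    mul_nonneg hK (Finset.sum_nonneg fun i _ => pow_nonneg hγ0.le i)
  refine ⟨n + 1, n.succ_pos, γ ^ (n + 1) * c / a, ⟨by positivity, (div_lt_one ha).mpr hcontract⟩,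
    (γ ^ (n + 1) * |d| + K * ∑ i ∈ Finset.range (n + 1), γ ^ i + |b|) / a, by positivity,
    γ * c / a + 1, by linarith [show 0 < γ * c / a by positivity],
    (γ * |d| + K + |b|) / a, by positivity, fun θ => ⟨?_, ?_⟩⟩
  · exact ((hdrift θ).kpow (hVθmeas θ) (hVθ0 θ) hγ0.le hK (n + 1)).of_affine_sandwich (hVθ0 θ)
      (pow_nonneg hγ0.le _) hsum ha (fun x => (hsandwich θ x).1) (fun x => (hsandwich θ x).2)
  · exact ((hdrift θ).of_affine_sandwich (hVθ0 θ) hγ0.le hK ha (fun x => (hsandwich θ x).1)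
      (fun x => (hsandwich θ x).2)).mono_s19 hV0 (by linarith) le_rfl

/-- Individual drift conditions with comparable Lyapunov functions imply
a uniform `r`-step drift condition and a uniform one-step growth condition for `V`. -/
theorem uniform_drift_of_individual_drifts
    {X : Type*} [MeasurableSpace X] {k : ℕ} {Θ : Set (EuclideanSpace ℝ (Fin k))}
    (hΘ : Θ.Nonempty) (P : Θ → Kernel X X) [∀ θ, IsMarkovKernel (P θ)]
    (Vθ : Θ → X → ℝ) (hVθmeas : ∀ θ, Measurable (Vθ θ)) (hVθ0 : ∀ θ x, 0 ≤ Vθ θ x)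
    (γ K : ℝ) (hγ : γ ∈ Set.Ioo (0:ℝ) 1) (hK : 0 ≤ K)
    (hdrift : ∀ θ, Drift (P θ) (Vθ θ) γ K)
    (V : X → ℝ) (hVmeas : Measurable V) (hV0 : ∀ x, 0 ≤ V x)
    (a b c d : ℝ) (ha : 0 < a) (hc : 0 < c)
    (hsandwich : ∀ θ x, a * V x + b ≤ Vθ θ x ∧ Vθ θ x ≤ c * V x + d) :
    ∃ r : ℕ, 0 < r ∧ ∃ γr ∈ Set.Ioo (0:ℝ) 1, ∃ Kr ≥ (0:ℝ), ∃ γ₁ > (1:ℝ), ∃ K₁ ≥ (0:ℝ),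
      ∀ θ, Drift (kpow (P θ) r) V γr Kr ∧ Drift (P θ) V γ₁ K₁ :=
  uniform_drift_of_individual_drifts_general P Vθ hVθmeas hVθ0 γ K hγ hK hdrift V hV0 a b c d ha hc
    hsandwich

end PoissonPaper
end
end
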